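/- arXiv:1103.1217 — 9 statements merged into one kernel-verified Lean document; each statement's English description precedes it below -/
import Mathlib

section
/- Let $f, g \in \mathbb{C}[X_1,\ldots,X_n]$ be such that $f = X_1 + f_2 + \cdots + f_l$ and $g = X_2 + g_2 + \cdots + g_m$, where $f_i, g_i$ are homogeneous of degree $i$. If $\deg[f,g] = 2$ (i.e., every $2\times 2$ Jacobian minor of $(f,g)$ is a constant) and $f$ does not involve the variable $X_i$ for some $i > 2$, then $g$ does not involve $X_i$ either. -/
open MvPolynomial

/-! Since `f` does not involve `X_i`, the minor for `(X_1, X_i)` is `∂₁f · ∂ᵢg`, so this product is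
a constant. Its constant term is `1 · 0`, the linear parts of `f` and `g` being `X_1` and `X_2`;
hence the product vanishes, and `∂₁f ≠ 0` forces `∂ᵢg = 0`. -/

namespace MvPolynomial

variable {σ R : Type*} [CommSemiring R]

theorem constantCoeff_pderiv (i : σ) (p : MvPolynomial σ R) :
    constantCoeff (pderiv i p) = coeff (Finsupp.single i 1) p := by
  simpa [constantCoeff_eq] using coeff_pderiv (i := i) p 0

theorem constantCoeff_pderiv_of_homogeneousComponent_one_eq_X [DecidableEq σ]
    {p : MvPolynomial σ R} {k : σ} (hp : homogeneousComponent 1 p = X k) (i : σ) :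
    constantCoeff (pderiv i p) = if k = i then 1 else 0 := by
  have hlinear : coeff (Finsupp.single i 1) (homogeneousComponent 1 p) =
      coeff (Finsupp.single i 1) p := by
    simp [coeff_homogeneousComponent, Finsupp.degree_single]
  rw [constantCoeff_pderiv, ← hlinear, hp, coeff_X]
  simp only [Finsupp.single_left_inj one_ne_zero]

theorem eq_zero_of_totalDegree_eq_zero_of_constantCoeff_eq_zero {p : MvPolynomial σ R}
    (hp : p.totalDegree = 0) (h0 : constantCoeff p = 0) : p = 0 := by
  rw [totalDegree_eq_zero_iff_eq_C.mp hp, ← constantCoeff_eq, h0, map_zero]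

theorem eq_zero_of_totalDegree_mul_eq_zero [NoZeroDivisors R] {p q : MvPolynomial σ R}
    (hpq : (p * q).totalDegree = 0) (hp : constantCoeff p ≠ 0) (hq : constantCoeff q = 0) :
    q = 0 := by
  have hp' : p ≠ 0 := fun h ↦ hp (by rw [h, map_zero])
  refine (mul_eq_zero.mp ?_).resolve_left hp'
  exact eq_zero_of_totalDegree_eq_zero_of_constantCoeff_eq_zero hpq (by rw [map_mul, hq, mul_zero])

end MvPolynomial

theorem poisson_deg_two_not_involve_general (n : ℕ)
    (f g : MvPolynomial (Fin (n + 3)) ℂ)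
    (hf1 : homogeneousComponent 1 f = X 0)
    (hg1 : homogeneousComponent 1 g = X 1)
    (hbr : ∀ j k : Fin (n + 3),
      (pderiv j f * pderiv k g - pderiv k f * pderiv j g).totalDegree = 0)
    (i : Fin (n + 3)) (hi1 : i ≠ 1)
    (hfi : pderiv i f = 0) :
    pderiv i g = 0 := by
  have hminor : (pderiv 0 f * pderiv i g).totalDegree = 0 := by
    simpa [hfi] using hbr 0 i
  refine eq_zero_of_totalDegree_mul_eq_zero hminor ?_ ?_
  · simp [constantCoeff_pderiv_of_homogeneousComponent_one_eq_X hf1]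
  · simp [constantCoeff_pderiv_of_homogeneousComponent_one_eq_X hg1, hi1.symm]

theorem poisson_deg_two_not_involve (n : ℕ)
    (f g : MvPolynomial (Fin (n + 3)) ℂ)
    (hf0 : homogeneousComponent 0 f = 0)
    (hf1 : homogeneousComponent 1 f = X 0)
    (hg0 : homogeneousComponent 0 g = 0)
    (hg1 : homogeneousComponent 1 g = X 1)
    (hbr : ∀ j k : Fin (n + 3),
      (pderiv j f * pderiv k g - pderiv k f * pderiv j g).totalDegree = 0)
    (i : Fin (n + 3)) (hi0 : i ≠ 0) (hi1 : i ≠ 1)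
    (hfi : pderiv i f = 0) :
    pderiv i g = 0 :=
  poisson_deg_two_not_involve_general n f g hf1 hg1 hbr i hi1 hfi
end

section
/- Let $1 \leq d_1 \leq \cdots \leq d_n$ be integers and suppose there is an index $i \in \{1,\ldots,n\}$ and natural numbers $k_1, \ldots, k_{i-1}$ such that $d_i = \sum_{j=1}^{i-1} k_j d_j$. Then there exists a tame polynomial automorphism $F$ of $\mathbb{C}^n$ with $\operatorname{mdeg} F = (d_1,\ldots,d_n)$, i.e., the coordinate functions of $F$ have degrees exactly $d_1, \ldots, d_n$. -/
open MvPolynomial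

/-- A polynomial self-map of `ℂⁿ`, given by its coordinate functions. -/
abbrev PolyMap (n : ℕ) := Fin n → MvPolynomial (Fin n) ℂ

/-- Composition of polynomial maps: `(F.comp G)` is `F ∘ G` (apply `G` first). -/
noncomputable def PolyMap.comp {n : ℕ} (F G : PolyMap n) : PolyMap n :=
  fun i => aeval G (F i)

/-- The identity polynomial map. -/
noncomputable def PolyMap.id (n : ℕ) : PolyMap n := fun i => X i

/-- A polynomial map is an automorphism if it has a polynomial inverse. -/
def PolyMap.IsAutomorphism {n : ℕ} (F : PolyMap n) : Prop :=
  ∃ G : PolyMap n, F.comp G = PolyMap.id n ∧ G.comp F = PolyMap.id n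

/-- Affine automorphisms: automorphisms all of whose coordinates have degree ≤ 1. -/
def PolyMap.IsAffine {n : ℕ} (F : PolyMap n) : Prop :=
  F.IsAutomorphism ∧ ∀ i, (F i).totalDegree ≤ 1

/-- Elementary maps: add to one coordinate a polynomial in the other coordinates. -/
def PolyMap.IsElementary {n : ℕ} (F : PolyMap n) : Prop :=
  ∃ (i : Fin n) (p : MvPolynomial (Fin n) ℂ),
    p ∈ supported ℂ ({i}ᶜ : Set (Fin n)) ∧
    F = Function.update (fun j => (X j : MvPolynomial (Fin n) ℂ)) i (X i + p)

/-- Tame maps: finite compositions of affine automorphisms and elementary maps. -/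
inductive PolyMap.IsTame {n : ℕ} : PolyMap n → Prop
  | affine {F : PolyMap n} : F.IsAffine → F.IsTame
  | elementary {F : PolyMap n} : F.IsElementary → F.IsTame
  | comp {F G : PolyMap n} : F.IsTame → G.IsTame → (F.comp G).IsTame

/-- The multidegree of a polynomial map. -/
noncomputable def PolyMap.mdeg {n : ℕ} (F : PolyMap n) : Fin n → ℕ :=
  fun i => (F i).totalDegree

/-- The identity map is tame. -/
lemma id_isTame (n : ℕ) : (PolyMap.id n).IsTame := by
  have hcomp : (PolyMap.id n).comp (PolyMap.id n) = PolyMap.id n := by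
    funext c; simp [PolyMap.comp, PolyMap.id]
  exact PolyMap.IsTame.affine ⟨⟨PolyMap.id n, hcomp, hcomp⟩,
    fun c => by simp [PolyMap.id, totalDegree_X]⟩

/-- Auxiliary: the map sending `X j ↦ X j + X i ^ e j` for `j ∈ s` (with `i ∉ s`)
    and fixing the other variables is tame. -/
lemma tame_aux (n : ℕ) (i : Fin n) (e : Fin n → ℕ) (s : Finset (Fin n)) (hs : i ∉ s) :
    PolyMap.IsTame (fun j => if j ∈ s then X j + X i ^ e j else (X j : MvPolynomial (Fin n) ℂ)) := by
  classical
  induction s using Finset.induction_on with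
  | empty =>
      have : (fun j => if j ∈ (∅ : Finset (Fin n)) then X j + X i ^ e j
          else (X j : MvPolynomial (Fin n) ℂ)) = PolyMap.id n := by
        funext j; simp [PolyMap.id]
      rw [this]; exact id_isTame n
  | @insert a s ha ih =>
      have hia : i ≠ a := fun h => hs (by simp [h])
      have his : i ∉ s := fun h => hs (Finset.mem_insert_of_mem h)
      set B : PolyMap n := fun j => if j ∈ s then X j + X i ^ e j
        else (X j : MvPolynomial (Fin n) ℂ) with hB
      have hE : PolyMap.IsElementary
          (Function.update (fun j => (X j : MvPolynomial (Fin n) ℂ)) a (X a + X i ^ e a)) := by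
        refine ⟨a, X i ^ e a, ?_, rfl⟩
        exact pow_mem ((X_mem_supported (R := ℂ)).2 (by simp [hia])) _
      have key : (fun j => if j ∈ insert a s then X j + X i ^ e j
          else (X j : MvPolynomial (Fin n) ℂ)) =
          PolyMap.comp (Function.update (fun j => (X j : MvPolynomial (Fin n) ℂ)) a
            (X a + X i ^ e a)) B := by
        funext c
        by_cases hc : c = a
        · subst hc
          simp only [PolyMap.comp, Function.update_self, map_add, map_pow, aeval_X]
          have hBc : B c = X c := by simp [hB, ha]
          have hBi : B i = X i := by simp [hB, his]
          simp [hBc, hBi]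
        · simp only [PolyMap.comp, Function.update_of_ne hc, aeval_X]
          simp [hB, Finset.mem_insert, hc]
      rw [key]
      exact PolyMap.IsTame.comp (PolyMap.IsTame.elementary hE) (ih his)

theorem tame_mdeg_of_combination (n : ℕ) (d : Fin n → ℕ)
    (hpos : ∀ j, 1 ≤ d j) (hmono : Monotone d)
    (i : Fin n) (k : Fin n → ℕ)
    (hsum : d i = ∑ j ∈ Finset.univ.filter (fun j => j < i), k j * d j) :
    ∃ F : PolyMap n, F.IsTame ∧ F.mdeg = d := by
  classical
  set S : Finset (Fin n) := Finset.univ.filter (fun j => j < i) with hS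
  have hSne : ∀ j ∈ S, j ≠ i := by
    intro j hj
    have : j < i := (Finset.mem_filter.mp hj).2
    exact ne_of_lt this
  -- the "triangular" tame map B
  set B : PolyMap n := fun j => if j ∈ Finset.univ.erase i then X j + X i ^ d j
    else (X j : MvPolynomial (Fin n) ℂ) with hB
  have hBtame : B.IsTame := tame_aux n i d _ (by simp)
  have hBj : ∀ j, j ≠ i → B j = X j + X i ^ d j := by
    intro j hj; simp [hB, hj]
  have hBi : B i = X i := by simp [hB]
  -- the elementary map adding the product
  set p : MvPolynomial (Fin n) ℂ := ∏ j ∈ S, X j ^ k j with hp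
  have hpmem : p ∈ supported ℂ ({i}ᶜ : Set (Fin n)) := by
    refine Subalgebra.prod_mem _ fun j hj => ?_
    exact pow_mem ((X_mem_supported (R := ℂ)).2 (by simp [hSne j hj])) _
  set E : PolyMap n := Function.update (fun j => (X j : MvPolynomial (Fin n) ℂ)) i (X i + p)
    with hEdef
  have hEel : E.IsElementary := ⟨i, p, hpmem, rfl⟩
  refine ⟨E.comp B, PolyMap.IsTame.comp (PolyMap.IsTame.elementary hEel) hBtame, ?_⟩
  -- compute the coordinates of F
  set Q : MvPolynomial (Fin n) ℂ := ∏ j ∈ S, (X j + X i ^ d j) ^ k j with hQ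
  have hF : ∀ c, (E.comp B) c = if c = i then X i + Q else X c + X i ^ d c := by
    intro c
    by_cases hc : c = i
    · subst hc
      simp only [PolyMap.comp, hEdef, Function.update_self, map_add, aeval_X, hBi, if_pos rfl]
      congr 1
      rw [hp, map_prod]
      refine Finset.prod_congr rfl fun j hj => ?_
      rw [map_pow, aeval_X, hBj j (hSne j hj)]
    · simp only [PolyMap.comp, hEdef, Function.update_of_ne hc, aeval_X, if_neg hc]
      exact hBj c hc
  -- the degree-detecting substitution
  set g : Fin n → Polynomial ℂ := fun j => if j = i then Polynomial.X else 0 with hg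
  have hgdeg : ∀ j, (g j).natDegree ≤ 1 := by
    intro j; by_cases hj : j = i <;> simp [hg, hj]
  have hlow : ∀ q : MvPolynomial (Fin n) ℂ, (aeval g q).natDegree ≤ q.totalDegree := by
    intro q
    simpa using MvPolynomial.aeval_natDegree_le q le_rfl g hgdeg
  have hgX : aeval g (X i : MvPolynomial (Fin n) ℂ) = Polynomial.X := by simp [hg]
  have hgXj : ∀ j, j ≠ i → aeval g (X j : MvPolynomial (Fin n) ℂ) = 0 := by
    intro j hj; simp [hg, hj]
  -- degrees
  funext c
  show ((E.comp B) c).totalDegree = d c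
  rw [hF c]
  by_cases hc : c = i
  · subst hc
    rw [if_pos rfl]
    -- upper bound
    have hub : (X c + Q).totalDegree ≤ d c := by
      refine (totalDegree_add _ _).trans (max_le (by simp [totalDegree_X, hpos c]) ?_)
      rw [hsum, hQ]
      refine (totalDegree_finset_prod _ _).trans (Finset.sum_le_sum fun j hj => ?_)
      refine (totalDegree_pow _ _).trans (Nat.mul_le_mul_left _ ?_)
      refine (totalDegree_add _ _).trans (max_le (by simp [totalDegree_X, hpos j]) ?_)
      simp [totalDegree_X_pow]
    -- lower bound via evaluation
    have himg : aeval g (X c + Q) = Polynomial.X + Polynomial.X ^ d c := by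
      rw [map_add, hgX, hQ, map_prod]
      congr 1
      have : ∀ j ∈ S, aeval g (((X j + X c ^ d j : MvPolynomial (Fin n) ℂ)) ^ k j) = Polynomial.X ^ (d j * k j) := by
        intro j hj
        rw [map_pow, map_add, hgXj j (hSne j hj), map_pow, hgX, zero_add, ← pow_mul]
      rw [Finset.prod_congr rfl this, Finset.prod_pow_eq_pow_sum]
      congr 1
      rw [hsum]
      exact Finset.sum_congr rfl fun j _ => mul_comm (d j) (k j)
    have hcoeff : ((Polynomial.X + Polynomial.X ^ d c : Polynomial ℂ)).coeff (d c) ≠ 0 := by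
      rw [Polynomial.coeff_add, Polynomial.coeff_X, Polynomial.coeff_X_pow, if_pos rfl]
      by_cases h1 : d c = 1
      · rw [if_pos h1.symm]; norm_num
      · rw [if_neg (fun h => h1 h.symm)]; norm_num
    have h1 : d c ≤ (aeval g (X c + Q)).natDegree := by
      rw [himg]; exact Polynomial.le_natDegree_of_ne_zero hcoeff
    have hlb : d c ≤ (X c + Q).totalDegree := h1.trans (hlow _)
    exact le_antisymm hub hlb
  · rw [if_neg hc]
    have hub : ((X c + X i ^ d c : MvPolynomial (Fin n) ℂ)).totalDegree ≤ d c := by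
      refine (totalDegree_add _ _).trans (max_le (by simp [totalDegree_X, hpos c]) ?_)
      simp [totalDegree_X_pow]
    have himg : aeval g ((X c + X i ^ d c : MvPolynomial (Fin n) ℂ)) = Polynomial.X ^ d c := by
      rw [map_add, hgXj c hc, map_pow, hgX, zero_add]
    have h1 : d c = (aeval g ((X c + X i ^ d c : MvPolynomial (Fin n) ℂ))).natDegree := by
      rw [himg, Polynomial.natDegree_X_pow]
    have hlb : d c ≤ ((X c + X i ^ d c : MvPolynomial (Fin n) ℂ)).totalDegree :=
      h1.le.trans (hlow _)
    exact le_antisymm hub hlb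
end

section
/- Let $1 \leq d_1 \leq \cdots \leq d_n$ be integers with $d_1 \leq n-1$. Then there exists a tame polynomial automorphism $F$ of $\mathbb{C}^n$ with $\operatorname{mdeg} F = (d_1,\ldots,d_n)$. -/
open MvPolynomial

/-! ### Auxiliary lemmas -/

/-- Substituting polynomials of degree ≤ 1 cannot increase the total degree. -/
lemma natDegree_aeval_le' {n : ℕ} (g : Fin n → Polynomial ℂ) (hg : ∀ i, (g i).natDegree ≤ 1)
    (p : MvPolynomial (Fin n) ℂ) : ((aeval g) p).natDegree ≤ p.totalDegree := by
  conv_lhs => rw [p.as_sum]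
  rw [map_sum]
  apply Polynomial.natDegree_sum_le_of_forall_le
  intro v hv
  rw [aeval_monomial]
  refine (Polynomial.natDegree_mul_le).trans ?_
  have h1 : (algebraMap ℂ (Polynomial ℂ) (coeff v p)).natDegree = 0 := Polynomial.natDegree_C _
  rw [h1, zero_add]
  refine (Polynomial.natDegree_prod_le _ _).trans ?_
  refine le_trans ?_ (le_totalDegree hv)
  rw [Finsupp.sum]
  apply Finset.sum_le_sum
  intro i _
  calc ((g i) ^ (v i)).natDegree ≤ v i * (g i).natDegree := Polynomial.natDegree_pow_le
    _ ≤ v i * 1 := Nat.mul_le_mul_left _ (hg i)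
    _ = v i := Nat.mul_one _

/-- The substitution sending `X i0 ↦ X` and all other variables to `0`. -/
noncomputable def phi {n : ℕ} (i0 : Fin n) : MvPolynomial (Fin n) ℂ →ₐ[ℂ] Polynomial ℂ :=
  aeval (fun t : Fin n => if t = i0 then (Polynomial.X : Polynomial ℂ) else 0)

lemma phi_deg_le {n : ℕ} (i0 : Fin n) (p : MvPolynomial (Fin n) ℂ) :
    (phi i0 p).natDegree ≤ p.totalDegree := by
  apply natDegree_aeval_le'
  intro i
  by_cases h : i = i0 <;> simp [h]

lemma deg_X_add_pow {n : ℕ} {k i0 : Fin n} (hk : k ≠ i0) {m : ℕ} (hm : 1 ≤ m) :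
    (X k + X i0 ^ m : MvPolynomial (Fin n) ℂ).totalDegree = m := by
  refine le_antisymm ((totalDegree_add _ _).trans ?_) ?_
  · rw [totalDegree_X, totalDegree_X_pow]
    omega
  · have hphi : phi i0 (X k + X i0 ^ m : MvPolynomial (Fin n) ℂ) = Polynomial.X ^ m := by
      simp [phi, hk]
    have h := phi_deg_le i0 (X k + X i0 ^ m : MvPolynomial (Fin n) ℂ)
    rw [hphi, Polynomial.natDegree_X_pow] at h
    exact h

/-- The identity is tame (it is affine). -/
lemma id_tame {n : ℕ} : (PolyMap.id n).IsTame := by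
  refine PolyMap.IsTame.affine ⟨⟨PolyMap.id n, ?_, ?_⟩, fun i => by
    simp [PolyMap.id, totalDegree_X]⟩ <;>
  · funext i
    simp [PolyMap.comp, PolyMap.id]

/-- The triangular-type map adding `X i0 ^ e k` to each coordinate `k ∈ S` is tame. -/
lemma tame_step {n : ℕ} (i0 : Fin n) (e : Fin n → ℕ) (S : Finset (Fin n)) (hS : i0 ∉ S) :
    PolyMap.IsTame (fun k => if k ∈ S then X k + X i0 ^ e k else X k) := by
  classical
  induction S using Finset.induction_on with
  | empty =>
    have h : (fun k => if k ∈ (∅ : Finset (Fin n)) then X k + X i0 ^ e k else X k)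
        = PolyMap.id n := by
      funext k; simp [PolyMap.id]
    rw [h]; exact id_tame
  | @insert a S ha ih =>
    have hi0a : i0 ≠ a := fun h => hS (h ▸ Finset.mem_insert_self a S)
    have hi0S : i0 ∉ S := fun h => hS (Finset.mem_insert_of_mem h)
    set E : PolyMap n :=
      Function.update (fun j => (X j : MvPolynomial (Fin n) ℂ)) a (X a + X i0 ^ e a) with hE
    have hEelem : E.IsElementary := by
      refine ⟨a, X i0 ^ e a, ?_, rfl⟩
      exact Subalgebra.pow_mem _ (X_mem_supported.mpr (by simpa using hi0a)) _
    have hcomp : (fun k => if k ∈ insert a S then X k + X i0 ^ e k else X k)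
        = E.comp (fun k => if k ∈ S then X k + X i0 ^ e k else X k) := by
      funext k
      by_cases hk : k = a
      · subst hk
        simp only [PolyMap.comp, hE, Function.update_self, map_add, map_pow, aeval_X,
          if_neg ha, if_neg hi0S, Finset.mem_insert_self, if_pos]
      · simp only [PolyMap.comp, hE, Function.update_of_ne hk, aeval_X,
          Finset.mem_insert, hk, false_or]
    rw [hcomp]
    exact PolyMap.IsTame.comp (.elementary hEelem) (ih hi0S)

/-- Pigeonhole: some `d i` is a nonnegative combination of `d ⟨0, hn⟩` and an earlier `d j`. -/
lemma pigeon {n : ℕ} (hn : 0 < n) (d : Fin n → ℕ) (hpos : ∀ j, 1 ≤ d j)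
    (hmono : Monotone d) (hsmall : d ⟨0, hn⟩ ≤ n - 1) :
    ∃ (i j : Fin n) (a c : ℕ), i ≠ ⟨0, hn⟩ ∧ j ≠ i ∧ d i = a * d ⟨0, hn⟩ + c * d j := by
  set z : Fin n := ⟨0, hn⟩ with hz
  set m : ℕ := d z with hm
  have hm1 : 1 ≤ m := hpos z
  have hlt : ∀ t ∈ Finset.Icc 1 m, t < n := by
    intro t ht
    rw [Finset.mem_Icc] at ht
    have := ht.2.trans hsmall
    omega
  by_cases hcase : ∃ t, ∃ h : t ∈ Finset.Icc 1 m, d ⟨t, hlt t h⟩ % m = 0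
  · obtain ⟨t, ht, hmod⟩ := hcase
    have ht' := Finset.mem_Icc.mp ht
    refine ⟨⟨t, hlt t ht⟩, z, d ⟨t, hlt t ht⟩ / m, 0, ?_, ?_, ?_⟩
    · intro h
      have : t = 0 := congrArg Fin.val h
      omega
    · intro h
      have : (0:ℕ) = t := congrArg Fin.val h
      omega
    · rw [Nat.div_mul_cancel (Nat.dvd_of_mod_eq_zero hmod), zero_mul, add_zero]
  · push_neg at hcase
    have hmaps : ∀ t ∈ Finset.Icc 1 m,
        (fun t => if h : t ∈ Finset.Icc 1 m then d ⟨t, hlt t h⟩ % m else 0) t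
          ∈ Finset.Ico 1 m := by
      intro t ht
      simp only [dif_pos ht, Finset.mem_Ico]
      exact ⟨Nat.one_le_iff_ne_zero.mpr (hcase t ht), Nat.mod_lt _ hm1⟩
    have hcard : (Finset.Ico 1 m).card < (Finset.Icc 1 m).card := by
      rw [Nat.card_Ico, Nat.card_Icc]; omega
    obtain ⟨x, hx, y, hy, hne, heq⟩ :=
      Finset.exists_ne_map_eq_of_card_lt_of_maps_to hcard hmaps
    simp only [dif_pos hx, dif_pos hy] at heq
    have key : ∀ x y : ℕ, ∀ hx : x ∈ Finset.Icc 1 m, ∀ hy : y ∈ Finset.Icc 1 m, x < y →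
        d ⟨x, hlt x hx⟩ % m = d ⟨y, hlt y hy⟩ % m →
        ∃ (i j : Fin n) (a c : ℕ), i ≠ z ∧ j ≠ i ∧ d i = a * d z + c * d j := by
      intro x y hx hy hxy heq
      set ix : Fin n := ⟨x, hlt x hx⟩
      set iy : Fin n := ⟨y, hlt y hy⟩
      have hle : d ix ≤ d iy := hmono (by exact Fin.mk_le_mk.mpr hxy.le)
      have hdvd : m ∣ (d iy - d ix) :=
        Nat.dvd_of_mod_eq_zero (Nat.sub_mod_eq_zero_of_mod_eq heq.symm)
      refine ⟨iy, ix, (d iy - d ix) / m, 1, ?_, ?_, ?_⟩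
      · intro h
        have : y = 0 := congrArg Fin.val h
        have := Finset.mem_Icc.mp hy; omega
      · intro h
        have : x = y := congrArg Fin.val h
        omega
      · rw [Nat.div_mul_cancel hdvd, one_mul]
        omega
    rcases Ne.lt_or_gt hne with h | h
    · exact key x y hx hy h heq
    · exact key y x hy hx h heq.symm

theorem tame_mdeg_of_small_first (n : ℕ) (hn : 0 < n) (d : Fin n → ℕ)
    (hpos : ∀ j, 1 ≤ d j) (hmono : Monotone d)
    (hsmall : d ⟨0, hn⟩ ≤ n - 1) :
    ∃ F : PolyMap n, F.IsTame ∧ F.mdeg = d := by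
  classical
  obtain ⟨i, j, a, c, hiz, hji, heq⟩ := pigeon hn d hpos hmono hsmall
  set z : Fin n := ⟨0, hn⟩ with hz
  set S : Finset (Fin n) := Finset.univ.erase i with hSdef
  have hiS : i ∉ S := Finset.notMem_erase _ _
  set P : PolyMap n := fun k => if k ∈ S then X k + X i ^ d k else X k with hP
  have hPtame : P.IsTame := tame_step i d S hiS
  have hzS : z ∈ S := Finset.mem_erase.mpr ⟨Ne.symm hiz, Finset.mem_univ _⟩
  have hjS : j ∈ S := Finset.mem_erase.mpr ⟨hji, Finset.mem_univ _⟩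
  set q : MvPolynomial (Fin n) ℂ := X z ^ a * X j ^ c with hq
  have hqsupp : q ∈ supported ℂ ({i}ᶜ : Set (Fin n)) := by
    refine Subalgebra.mul_mem _ (Subalgebra.pow_mem _ ?_ _) (Subalgebra.pow_mem _ ?_ _)
    · exact X_mem_supported.mpr (by simpa using Ne.symm hiz)
    · exact X_mem_supported.mpr (by simpa using hji)
  set E : PolyMap n :=
    Function.update (fun k => (X k : MvPolynomial (Fin n) ℂ)) i (X i + q) with hE
  have hEelem : E.IsElementary := ⟨i, q, hqsupp, rfl⟩
  refine ⟨E.comp P, PolyMap.IsTame.comp (.elementary hEelem) hPtame, ?_⟩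
  funext k
  show (aeval P (E k)).totalDegree = d k
  by_cases hk : k = i
  · subst hk
    rw [hE, Function.update_self]
    have hPz : P z = X z + X k ^ d z := by rw [hP]; exact if_pos hzS
    have hPj : P j = X j + X k ^ d j := by rw [hP]; exact if_pos hjS
    have hPk : P k = X k := by rw [hP]; exact if_neg hiS
    have hexp : aeval P (X k + q) =
        X k + (X z + X k ^ d z) ^ a * (X j + X k ^ d j) ^ c := by
      rw [hq, map_add, map_mul, map_pow, map_pow, aeval_X, aeval_X, aeval_X, hPz, hPj, hPk]
    rw [hexp]
    have hdegA : ((X z + X k ^ d z : MvPolynomial (Fin n) ℂ)).totalDegree = d z :=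
      deg_X_add_pow (Ne.symm hiz) (hpos z)
    have hdegB : ((X j + X k ^ d j : MvPolynomial (Fin n) ℂ)).totalDegree = d j :=
      deg_X_add_pow hji (hpos j)
    refine le_antisymm ?_ ?_
    · refine (totalDegree_add _ _).trans ?_
      have h2 : ((X z + X k ^ d z : MvPolynomial (Fin n) ℂ) ^ a *
          (X j + X k ^ d j) ^ c).totalDegree ≤ a * d z + c * d j := by
        refine (totalDegree_mul _ _).trans ?_
        have ha' := totalDegree_pow (X z + X k ^ d z : MvPolynomial (Fin n) ℂ) a
        have hc' := totalDegree_pow (X j + X k ^ d j : MvPolynomial (Fin n) ℂ) c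
        rw [hdegA] at ha'
        rw [hdegB] at hc'
        omega
      rw [totalDegree_X]
      have := hpos k
      omega
    · -- lower bound via phi
      have hphiA : phi k (X z + X k ^ d z : MvPolynomial (Fin n) ℂ) = Polynomial.X ^ d z := by
        simp [phi, Ne.symm hiz]
      have hphiB : phi k (X j + X k ^ d j : MvPolynomial (Fin n) ℂ) = Polynomial.X ^ d j := by
        simp [phi, hji]
      have hphiAll : phi k (X k + (X z + X k ^ d z) ^ a * (X j + X k ^ d j) ^ c :
          MvPolynomial (Fin n) ℂ) = Polynomial.X + Polynomial.X ^ (a * d z + c * d j) := by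
        rw [map_add, map_mul, map_pow, map_pow, hphiA, hphiB, ← pow_mul, ← pow_mul, ← pow_add]
        have hXk : phi k (X k : MvPolynomial (Fin n) ℂ) = Polynomial.X := by simp [phi]
        rw [hXk, Nat.mul_comm (d z) a, Nat.mul_comm (d j) c]
      have hcoeff : (Polynomial.X + Polynomial.X ^ (a * d z + c * d j) :
          Polynomial ℂ).coeff (d k) ≠ 0 := by
        rw [Polynomial.coeff_add, Polynomial.coeff_X, Polynomial.coeff_X_pow, ← heq, if_pos rfl]
        split <;> norm_num
      have hle := Polynomial.le_natDegree_of_ne_zero hcoeff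
      have := phi_deg_le k (X k + (X z + X k ^ d z) ^ a * (X j + X k ^ d j) ^ c :
          MvPolynomial (Fin n) ℂ)
      rw [hphiAll] at this
      exact hle.trans this
  · rw [hE, Function.update_of_ne hk, aeval_X]
    have hkS : P k = X k + X i ^ d k := by rw [hP]; exact if_pos (Finset.mem_erase.mpr ⟨hk, Finset.mem_univ _⟩)
    rw [hkS]
    exact deg_X_add_pow hk (hpos k)
end

section
/- Let $1 \leq d_1 \leq \cdots \leq d_n$ be integers with $\frac{d_1}{\gcd(d_1,\ldots,d_n)} \leq n-1$. Then there exists a tame polynomial automorphism $F$ of $\mathbb{C}^n$ with $\operatorname{mdeg} F = (d_1,\ldots,d_n)$. -/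
open MvPolynomial

/-!### Auxiliary lemmas -/

lemma id_isAffine {n : ℕ} : (PolyMap.id n).IsAffine := by
  refine ⟨⟨PolyMap.id n, ?_, ?_⟩, fun i => by simp [PolyMap.id, totalDegree_X]⟩ <;>
  · funext i; simp [PolyMap.comp, PolyMap.id]

lemma elem_isElementary {n : ℕ} (i : Fin n) (p : MvPolynomial (Fin n) ℂ)
    (hp : ↑p.vars ⊆ ({i}ᶜ : Set (Fin n))) :
    PolyMap.IsElementary (Function.update (fun j => (X j : MvPolynomial (Fin n) ℂ)) i (X i + p)) :=
  ⟨i, p, (mem_supported).2 hp, rfl⟩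

/-- The triangular map adding `X k ^ c i` to the coordinates in `s` is tame. -/
lemma tame_T {n : ℕ} (k : Fin n) (c : Fin n → ℕ) (s : Finset (Fin n)) (hk : k ∉ s) :
    PolyMap.IsTame (fun i => if i ∈ s then X i + X k ^ c i else X i) := by
  classical
  induction s using Finset.induction with
  | empty =>
      have : (fun i : Fin n => if i ∈ (∅ : Finset (Fin n)) then X i + X k ^ c i else X i)
          = PolyMap.id n := by funext i; simp [PolyMap.id]
      rw [this]; exact .affine id_isAffine
  | @insert m s hm ih =>
      have hmk : m ≠ k := fun h => hk (h ▸ Finset.mem_insert_self m s)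
      have hks : k ∉ s := fun h => hk (Finset.mem_insert_of_mem h)
      have heq : (fun i : Fin n => if i ∈ insert m s then X i + X k ^ c i else X i)
          = PolyMap.comp
              (Function.update (fun j => (X j : MvPolynomial (Fin n) ℂ)) m (X m + X k ^ c m))
              (fun i => if i ∈ s then X i + X k ^ c i else X i) := by
        funext i
        simp only [PolyMap.comp]
        by_cases him : i = m
        · subst him
          rw [Function.update_self]
          simp only [map_add, map_pow, aeval_X, Finset.mem_insert_self, if_true, if_neg hm,
            if_neg hks]
        · rw [Function.update_of_ne him, aeval_X]
          simp [Finset.mem_insert, him]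
      rw [heq]
      refine .comp (.elementary (elem_isElementary m _ ?_)) (ih hks)
      intro x hx
      simp only [Set.mem_compl_iff, Set.mem_singleton_iff]
      have hx' : x ∈ (X k ^ c m : MvPolynomial (Fin n) ℂ).vars := hx
      have h2 := vars_pow (X k : MvPolynomial (Fin n) ℂ) (c m) hx'
      rw [vars_X] at h2
      simp only [Finset.mem_singleton] at h2
      subst h2; exact Ne.symm hmk

/-- Substituting degree-≤1 polynomials cannot raise the total degree. -/
lemma bridge {n : ℕ} (g : Fin n → Polynomial ℂ) (hg : ∀ i, (g i).natDegree ≤ 1)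
    (p : MvPolynomial (Fin n) ℂ) : (aeval g p).natDegree ≤ p.totalDegree := by
  conv_lhs => rw [p.as_sum]
  rw [map_sum]
  apply Polynomial.natDegree_sum_le_of_forall_le
  intro s hs
  rw [aeval_monomial]
  refine le_trans (Polynomial.natDegree_C_mul_le _ _) ?_
  refine le_trans ?_ (le_totalDegree hs)
  refine le_trans (Polynomial.natDegree_prod_le _ _) ?_
  rw [Finsupp.sum]
  apply Finset.sum_le_sum
  intro i _
  calc (g i ^ s i).natDegree ≤ s i * (g i).natDegree := Polynomial.natDegree_pow_le
    _ ≤ s i * 1 := Nat.mul_le_mul_left _ (hg i)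
    _ = s i := Nat.mul_one _

lemma L1 {n : ℕ} (i k : Fin n) (h : i ≠ k) (e : ℕ) (he : 1 ≤ e) :
    (X i + X k ^ e : MvPolynomial (Fin n) ℂ).totalDegree = e := by
  apply le_antisymm
  · refine (totalDegree_add _ _).trans ?_
    simp [totalDegree_X, totalDegree_X_pow, he]
  · have hb := bridge (fun m => if m = k then Polynomial.X else 0)
      (fun m => by by_cases hm : m = k <;> simp [hm]) (X i + X k ^ e)
    have hval : aeval (fun m => if m = k then Polynomial.X else 0)
        (X i + X k ^ e : MvPolynomial (Fin n) ℂ)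
        = (Polynomial.X ^ e : Polynomial ℂ) := by
      simp [map_add, map_pow, aeval_X, if_neg h]
    rw [hval, Polynomial.natDegree_X_pow] at hb
    exact hb

lemma L2 {n : ℕ} (a z k : Fin n) (h1 : a ≠ k) (h2 : z ≠ k) (da dz t : ℕ)
    (hda : 1 ≤ da) (hdz : 1 ≤ dz) :
    (X k + (X a + X k ^ da) * (X z + X k ^ dz) ^ t : MvPolynomial (Fin n) ℂ).totalDegree
      = da + t * dz := by
  apply le_antisymm
  · refine (totalDegree_add _ _).trans (max_le ?_ ?_)
    · simp only [totalDegree_X]; omega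
    · refine le_trans (totalDegree_mul _ _) ?_
      have hq1 : (X a + X k ^ da : MvPolynomial (Fin n) ℂ).totalDegree ≤ da :=
        (totalDegree_add _ _).trans (by simp [totalDegree_X, totalDegree_X_pow, hda])
      have hq2 : ((X z + X k ^ dz : MvPolynomial (Fin n) ℂ) ^ t).totalDegree ≤ t * dz := by
        refine le_trans (totalDegree_pow _ _) ?_
        have hh : (X z + X k ^ dz : MvPolynomial (Fin n) ℂ).totalDegree ≤ dz :=
          (totalDegree_add _ _).trans (by simp [totalDegree_X, totalDegree_X_pow, hdz])
        exact Nat.mul_le_mul_left _ hh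
      omega
  · have hb := bridge (fun m => if m = k then Polynomial.X else 0)
      (fun m => by by_cases hm : m = k <;> simp [hm])
      (X k + (X a + X k ^ da) * (X z + X k ^ dz) ^ t)
    have hval : aeval (fun m => if m = k then Polynomial.X else 0)
        (X k + (X a + X k ^ da) * (X z + X k ^ dz) ^ t : MvPolynomial (Fin n) ℂ)
        = (Polynomial.X + Polynomial.X ^ (da + dz * t) : Polynomial ℂ) := by
      simp only [map_add, map_mul, map_pow, aeval_X, if_pos rfl, if_neg h1, if_neg h2,
        zero_add, ← pow_mul, ← pow_add, if_true]
    rw [hval] at hb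
    refine le_trans ?_ hb
    apply Polynomial.le_natDegree_of_ne_zero
    have hc : da + dz * t = da + t * dz := by ring
    rw [Polynomial.coeff_add, hc, Polynomial.coeff_X_pow]
    by_cases hD : da + t * dz = 1
    · rw [hD]; norm_num
    · rw [Polynomial.coeff_X_of_ne_one (by omega)]
      norm_num

lemma arith {n : ℕ} (hn : 0 < n) (d : Fin n → ℕ) (hpos : ∀ j, 1 ≤ d j) (hmono : Monotone d)
    (hsmall : d ⟨0, hn⟩ / Finset.univ.gcd d ≤ n - 1) :
    ∃ a k : Fin n, a < k ∧ ∃ t : ℕ, d k = d a + t * d ⟨0, hn⟩ := by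
  set z : Fin n := ⟨0, hn⟩ with hz
  set g := Finset.univ.gcd d with hgdef
  have hgdvd : ∀ i, g ∣ d i := fun i => Finset.gcd_dvd (Finset.mem_univ i)
  have hgpos : 0 < g := by
    rcases Nat.eq_zero_or_pos g with h | h
    · exfalso
      have h0 : d z = 0 := Nat.eq_zero_of_zero_dvd (h ▸ hgdvd z)
      have := hpos z; omega
    · exact h
  set E := d z / g with hEdef
  have hdz : g * E = d z := Nat.mul_div_cancel' (hgdvd z)
  have hEpos : 0 < E := by
    rcases Nat.eq_zero_or_pos E with h | h
    · exfalso; have := hpos z; rw [← hdz, h, Nat.mul_zero] at this; omega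
    · exact h
  have hEn : E < n := lt_of_le_of_lt hsmall (Nat.sub_lt hn one_pos)
  have key : ∀ a k : Fin n, a < k → (d a / g) % E = (d k / g) % E →
      ∃ a k : Fin n, a < k ∧ ∃ t : ℕ, d k = d a + t * d z := by
    intro a k hak hm
    have hle : d a / g ≤ d k / g := Nat.div_le_div_right (hmono hak.le)
    have hdvd : E ∣ (d k / g - d a / g) := (Nat.modEq_iff_dvd' hle).1 hm
    obtain ⟨t, ht⟩ := hdvd
    refine ⟨a, k, hak, t, ?_⟩
    have h1 : d k / g = d a / g + E * t := by omega
    have h2 : g * (d k / g) = d k := Nat.mul_div_cancel' (hgdvd k)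
    have h3 : g * (d a / g) = d a := Nat.mul_div_cancel' (hgdvd a)
    calc d k = g * (d k / g) := h2.symm
      _ = g * (d a / g) + t * (g * E) := by rw [h1]; ring
      _ = d a + t * d z := by rw [h3, hdz]
  obtain ⟨i, j, hij, hfe⟩ := Fintype.exists_ne_map_eq_of_card_lt
    (fun i : Fin n => (⟨(d i / g) % E, Nat.mod_lt _ hEpos⟩ : Fin E))
    (by simpa using hEn)
  have hmod : (d i / g) % E = (d j / g) % E := by
    have := congrArg Fin.val hfe
    simpa using this
  rcases lt_or_gt_of_ne hij with hlt | hlt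
  · exact key i j hlt hmod
  · exact key j i hlt hmod.symm

theorem tame_mdeg_of_small_first_div_gcd (n : ℕ) (hn : 0 < n) (d : Fin n → ℕ)
    (hpos : ∀ j, 1 ≤ d j) (hmono : Monotone d)
    (hsmall : d ⟨0, hn⟩ / Finset.univ.gcd d ≤ n - 1) :
    ∃ F : PolyMap n, F.IsTame ∧ F.mdeg = d := by
  classical
  obtain ⟨a, k, hak, t, hrep⟩ := arith hn d hpos hmono hsmall
  set z : Fin n := ⟨0, hn⟩ with hzdef
  have hka : a ≠ k := ne_of_lt hak
  have hza : z ≤ a := Fin.le_def.mpr (Nat.zero_le _)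
  have hkz : z ≠ k := ne_of_lt (lt_of_le_of_lt hza hak)
  set T : PolyMap n := fun i => if i ∈ Finset.univ.erase k then X i + X k ^ d i else X i
    with hTdef
  set Em : PolyMap n := Function.update (fun j => (X j : MvPolynomial (Fin n) ℂ)) k
      (X k + X a * X z ^ t) with hEmdef
  have hvars : ↑(X a * X z ^ t : MvPolynomial (Fin n) ℂ).vars ⊆ ({k}ᶜ : Set (Fin n)) := by
    intro x hx
    simp only [Set.mem_compl_iff, Set.mem_singleton_iff]
    have hx' : x ∈ (X a * X z ^ t : MvPolynomial (Fin n) ℂ).vars := hx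
    have h := vars_mul (X a : MvPolynomial (Fin n) ℂ) (X z ^ t) hx'
    rw [Finset.mem_union] at h
    rcases h with h | h
    · rw [vars_X] at h
      simp only [Finset.mem_singleton] at h
      subst h; exact hka
    · have h2 := vars_pow (X z : MvPolynomial (Fin n) ℂ) t h
      rw [vars_X] at h2
      simp only [Finset.mem_singleton] at h2
      subst h2; exact hkz
  refine ⟨Em.comp T,
    .comp (.elementary ⟨k, X a * X z ^ t, (mem_supported).2 hvars, hEmdef⟩)
      (tame_T k d (Finset.univ.erase k) (by simp)), ?_⟩
  have hTk : T k = X k := by rw [hTdef]; simp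
  have hTne : ∀ m, m ≠ k → T m = X m + X k ^ d m := by
    intro m h; rw [hTdef]; simp [h]
  funext i
  show (aeval T (Em i)).totalDegree = d i
  by_cases hik : i = k
  · subst hik
    rw [hEmdef, Function.update_self]
    simp only [map_add, map_mul, map_pow, aeval_X]
    rw [hTk, hTne a hka, hTne z hkz, L2 a z i hka hkz (d a) (d z) t (hpos a) (hpos z)]
    omega
  · rw [hEmdef, Function.update_of_ne hik, aeval_X, hTne i hik,
      L1 i k hik (d i) (hpos i)]
end

section
/- If $f, g$ is a $p$-reduced pair of polynomials in $\mathbb{C}[X_1,\ldots,X_n]$, then $p > 1$. That is, if $f, g$ are algebraically independent with $\deg f < \deg g$, their leading forms $\bar f, \bar g$ are algebraically dependent, and $\bar f \notin \mathbb{C}[\bar g]$, $\bar g \notin \mathbb{C}[\bar f]$, then $\deg f / \gcd(\deg f, \deg g) > 1$, equivalently $\deg f$ does not divide $\deg g$. -/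
/-!
Write `d = deg f`, `e = deg g = k d`, and let `F, G` be the leading forms. Because `F` and `G` are
homogeneous, the weighted homogeneous component (for the weights `(d, e)`) of an algebraic relation
between them is again a relation. In such a relation every monomial `X^a Y^b` has the same
`a + k b = S`, so after dividing by `F^S` it becomes a nonzero polynomial equation for
`G / F^k` over `ℂ`. Hence `G / F^k` is algebraic over `ℂ`, so it is a constant `c`, and
`G = c F^k ∈ ℂ[F]`.
-/

open MvPolynomial

namespace Finsupp

theorem weight_const_mul {ι : Type*} (d : ℕ) (w : ι → ℕ) (m : ι →₀ ℕ) :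
    weight (fun i => d * w i) m = d * weight w m := by
  simp only [weight_apply, Finsupp.sum, Finset.mul_sum, smul_eq_mul]
  exact Finset.sum_congr rfl fun i _ => by ring

theorem weight_fin_two (v : Fin 2 → ℕ) (m : Fin 2 →₀ ℕ) :
    weight v m = m 0 * v 0 + m 1 * v 1 := by
  simp [weight_eq_sum, Fin.sum_univ_two]

end Finsupp

namespace MvPolynomial

section CommSemiring

variable {σ ι R : Type*} [CommSemiring R]

theorem IsWeightedHomogeneous.of_const_mul_weight {P : MvPolynomial ι R} {d N : ℕ}
    {w : ι → ℕ} (hd : 0 < d) (hP : P.IsWeightedHomogeneous (fun i => d * w i) N) :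
    P.IsWeightedHomogeneous w (N / d) := by
  intro m hm
  rw [← hP hm, Finsupp.weight_const_mul, Nat.mul_div_cancel_left _ hd]

theorem isHomogeneous_aeval_monomial {x : ι → MvPolynomial σ R} {w : ι → ℕ}
    (hx : ∀ i, (x i).IsHomogeneous (w i)) (m : ι →₀ ℕ) (c : R) :
    (aeval x (monomial m c)).IsHomogeneous (Finsupp.weight w m) := by
  rw [aeval_monomial, algebraMap_eq, Finsupp.weight_apply, Finsupp.sum, Finsupp.prod]
  simpa [mul_comm] using (isHomogeneous_C σ c).mul
    (IsHomogeneous.prod _ _ _ fun i _ => (hx i).pow (m i))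

theorem homogeneousComponent_aeval {x : ι → MvPolynomial σ R} {w : ι → ℕ}
    (hx : ∀ i, (x i).IsHomogeneous (w i)) (N : ℕ) (P : MvPolynomial ι R) :
    homogeneousComponent N (aeval x P) = aeval x (weightedHomogeneousComponent w N P) := by
  classical
  conv_lhs => rw [P.as_sum]
  rw [map_sum, map_sum, weightedHomogeneousComponent_apply, Finset.sum_filter, map_sum]
  refine Finset.sum_congr rfl fun m _ => ?_
  rw [homogeneousComponent_of_mem (isHomogeneous_aeval_monomial hx m _)]
  split_ifs <;> simp_all [eq_comm]

theorem aeval_pow_mul_monomial {S : Type*} [CommSemiring S] [Algebra R S] (w : ι → ℕ) (t : S)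
    (y : ι → S) (m : ι →₀ ℕ) (c : R) :
    aeval (fun i => t ^ w i * y i) (monomial m c)
      = t ^ Finsupp.weight w m * aeval y (monomial m c) := by
  simp only [aeval_monomial, Finsupp.weight_apply, Finsupp.sum, Finsupp.prod, mul_pow,
    Finset.prod_mul_distrib, ← pow_mul, Finset.prod_pow_eq_pow_sum, smul_eq_mul, mul_comm (w _)]
  ring

theorem IsWeightedHomogeneous.aeval_pow_mul {S : Type*} [CommSemiring S] [Algebra R S]
    {w : ι → ℕ} {N : ℕ} {P : MvPolynomial ι R} (hP : P.IsWeightedHomogeneous w N) (t : S)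
    (y : ι → S) : aeval (fun i => t ^ w i * y i) P = t ^ N * aeval y P := by
  induction hP using IsWeightedHomogeneous.induction_on with
  | zero => simp
  | add p q _ _ hp hq => rw [map_add, map_add, hp, hq, mul_add]
  | monomial m c hm => rw [aeval_pow_mul_monomial, hm]

theorem aeval_one_X_monomial (m : Fin 2 →₀ ℕ) (c : R) :
    aeval ![1, (Polynomial.X : Polynomial R)] (monomial m c)
      = Polynomial.C c * Polynomial.X ^ m 1 := by
  simp [aeval_monomial, Finsupp.prod_fintype, Fin.prod_univ_two, Polynomial.algebraMap_eq]

theorem IsWeightedHomogeneous.aeval_one_X_ne_zero {P : MvPolynomial (Fin 2) R} {k S : ℕ}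
    (hP : P.IsWeightedHomogeneous ![1, k] S) (hP0 : P ≠ 0) :
    aeval ![1, (Polynomial.X : Polynomial R)] P ≠ 0 := by
  obtain ⟨m₀, hm₀⟩ := Finset.nonempty_of_ne_empty (mt support_eq_empty.mp hP0)
  have hdeg : ∀ m ∈ P.support, m 0 + m 1 * k = S := fun m hm => by
    simpa [Finsupp.weight_fin_two] using hP (mem_support_iff.mp hm)
  have hinj : ∀ m ∈ P.support, m 1 = m₀ 1 → m = m₀ := fun m hm h1 => by
    have h0 : m 0 = m₀ 0 := by
      have := hdeg m hm
      rw [h1, ← hdeg m₀ hm₀] at this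
      omega
    ext i
    fin_cases i <;> assumption
  intro h
  have hcoeff := congrArg (Polynomial.coeff · (m₀ 1)) h
  rw [P.as_sum, map_sum, Polynomial.finsetSum_coeff, Finset.sum_eq_single m₀] at hcoeff
  · rw [aeval_one_X_monomial, Polynomial.coeff_C_mul_X_pow, if_pos rfl] at hcoeff
    exact mem_support_iff.mp hm₀ hcoeff
  · intro m hm hne
    rw [aeval_one_X_monomial, Polynomial.coeff_C_mul_X_pow,
      if_neg fun h => hne (hinj m hm h.symm)]
  · exact fun h => absurd hm₀ h

end CommSemiring

theorem exists_isWeightedHomogeneous_aeval_eq_zero {σ ι R : Type*} [CommRing R]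
    {x : ι → MvPolynomial σ R} {w : ι → ℕ} (hx : ∀ i, (x i).IsHomogeneous (w i))
    (h : ¬ AlgebraicIndependent R x) :
    ∃ P : MvPolynomial ι R,
      P ≠ 0 ∧ (∃ N, P.IsWeightedHomogeneous w N) ∧ aeval x P = 0 := by
  classical
  obtain ⟨P, hP0, hP⟩ : ∃ P, aeval x P = 0 ∧ P ≠ 0 := by
    simpa only [algebraicIndependent_iff, not_forall, exists_prop] using h
  obtain ⟨m, hm⟩ := Finset.nonempty_of_ne_empty (mt support_eq_empty.mp hP)
  refine ⟨weightedHomogeneousComponent w (Finsupp.weight w m) P, fun h0 => ?_,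
    ⟨_, weightedHomogeneousComponent_isWeightedHomogeneous _ _⟩, ?_⟩
  · have := congrArg (coeff m) h0
    rw [coeff_weightedHomogeneousComponent, if_pos rfl, coeff_zero] at this
    exact mem_support_iff.mp hm this
  · rw [← homogeneousComponent_aeval hx, hP0, map_zero]

theorem eq_algebraMap_mul_pow_of_aeval_eq_zero {K A : Type*} [Field K] [IsAlgClosed K]
    [CommRing A] [IsDomain A] [Algebra K A] {F G : A} (hF : F ≠ 0) {k S : ℕ}
    {P : MvPolynomial (Fin 2) K} (hP0 : P ≠ 0) (hP : P.IsWeightedHomogeneous ![1, k] S)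
    (hFG : aeval ![F, G] P = 0) :
    ∃ c : K, G = algebraMap K A c * F ^ k := by
  let L := FractionRing A
  have hinj : Function.Injective (algebraMap A L) := IsFractionRing.injective A L
  have hFL : algebraMap A L F ≠ 0 := (map_ne_zero_iff _ hinj).mpr hF
  set s : L := algebraMap A L G / algebraMap A L F ^ k
  have hGL : algebraMap A L G = algebraMap A L F ^ k * s := by
    rw [mul_div_cancel₀ _ (pow_ne_zero _ hFL)]
  have hs : Polynomial.aeval s (aeval ![1, (Polynomial.X : Polynomial K)] P) = 0 := by
    have hscale : (fun i => algebraMap A L F ^ (![1, k] i) * ![1, s] i)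
        = fun i => IsScalarTower.toAlgHom K A L (![F, G] i) := by
      funext i; fin_cases i <;> simp [hGL]
    have hdehom : (fun i => Polynomial.aeval s (![1, (Polynomial.X : Polynomial K)] i))
        = ![1, s] := by
      funext i; fin_cases i <;> simp
    have hfactor := hP.aeval_pow_mul (algebraMap A L F) ![1, s]
    rw [hscale, ← comp_aeval_apply, hFG, map_zero, eq_comm] at hfactor
    rw [comp_aeval_apply, hdehom]
    exact (mul_eq_zero.mp hfactor).resolve_left (pow_ne_zero _ hFL)
  obtain ⟨c, hc⟩ : s ∈ (algebraMap K L).range :=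
    minpoly.degree_eq_one_iff.mp (IsAlgClosed.degree_eq_one_of_irreducible K
      (minpoly.irreducible (IsAlgebraic.isIntegral ⟨_, hP.aeval_one_X_ne_zero hP0, hs⟩)))
  refine ⟨c, hinj ?_⟩
  rw [map_mul, map_pow, hGL, ← hc, IsScalarTower.algebraMap_apply K A L, mul_comm]

end MvPolynomial

theorem p_reduced_pair_p_gt_one_general (n : ℕ) (f g : MvPolynomial (Fin n) ℂ)
    (hdeg : f.totalDegree < g.totalDegree)
    (hdep : ¬ AlgebraicIndependent ℂ
      ![homogeneousComponent f.totalDegree f, homogeneousComponent g.totalDegree g])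
    (hfg : homogeneousComponent f.totalDegree f ∉
      Algebra.adjoin ℂ ({homogeneousComponent g.totalDegree g} :
        Set (MvPolynomial (Fin n) ℂ)))
    (hgf : homogeneousComponent g.totalDegree g ∉
      Algebra.adjoin ℂ ({homogeneousComponent f.totalDegree f} :
        Set (MvPolynomial (Fin n) ℂ))) :
    ¬ f.totalDegree ∣ g.totalDegree := by
  rintro ⟨k, hk⟩
  set F := homogeneousComponent f.totalDegree f
  have hF : F ≠ 0 := fun h => hfg (h ▸ Subalgebra.zero_mem _)
  have hd : 0 < f.totalDegree := Nat.pos_of_ne_zero fun h => by rw [h, zero_mul] at hk; omega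
  have hhom : ∀ i, (![F, homogeneousComponent g.totalDegree g] i).IsHomogeneous
      (f.totalDegree * ![1, k] i) := by
    simpa [Fin.forall_fin_two, ← hk] using
      ⟨homogeneousComponent_isHomogeneous _ f, homogeneousComponent_isHomogeneous _ g⟩
  obtain ⟨P, hP0, ⟨N, hP⟩, hPFG⟩ := exists_isWeightedHomogeneous_aeval_eq_zero hhom hdep
  obtain ⟨c, hc⟩ :=
    eq_algebraMap_mul_pow_of_aeval_eq_zero hF hP0 (hP.of_const_mul_weight hd) hPFG
  exact hgf (hc ▸ Subalgebra.mul_mem _ (Subalgebra.algebraMap_mem _ c)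
    (Subalgebra.pow_mem _ (Algebra.self_mem_adjoin_singleton ℂ F) k))

theorem p_reduced_pair_p_gt_one (n : ℕ) (f g : MvPolynomial (Fin n) ℂ)
    (hind : AlgebraicIndependent ℂ ![f, g])
    (hdeg : f.totalDegree < g.totalDegree)
    (hdep : ¬ AlgebraicIndependent ℂ
      ![homogeneousComponent f.totalDegree f, homogeneousComponent g.totalDegree g])
    (hfg : homogeneousComponent f.totalDegree f ∉
      Algebra.adjoin ℂ ({homogeneousComponent g.totalDegree g} :
        Set (MvPolynomial (Fin n) ℂ)))
    (hgf : homogeneousComponent g.totalDegree g ∉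
      Algebra.adjoin ℂ ({homogeneousComponent f.totalDegree f} :
        Set (MvPolynomial (Fin n) ℂ))) :
    ¬ f.totalDegree ∣ g.totalDegree :=
  p_reduced_pair_p_gt_one_general n f g hdeg hdep hfg hgf
end

section
/- Let $f, g \in \mathbb{C}[X_1,\ldots,X_n]$ be algebraically independent polynomials whose leading forms $\bar f, \bar g$ are also algebraically independent, with $\deg f < \deg g$. Then for every $G \in \mathbb{C}[X,Y]$, $\deg G(f,g) \geq \deg_Y G \cdot \deg g$. -/
/-!
Weight `X` by `deg f` and `Y` by `deg g`, and let `W` be the top weighted degree of `G`. A monomial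
of weight `k` becomes a polynomial of degree at most `k` after substituting `f, g`, and its degree
`k` component is obtained by substituting the leading forms `f̄, ḡ`. Hence the degree `W`
component of `G(f, g)` is `G_W(f̄, ḡ)`, where `G_W` is the (nonzero) top weighted-homogeneous
part of `G`; it does not vanish because `f̄, ḡ` are algebraically independent. So
`deg G(f, g) ≥ W ≥ deg_Y G · deg g`.
-/

open MvPolynomial

namespace Finsupp

variable {σ : Type*}

theorem weight_eq_sum_mul (w : σ → ℕ) (d : σ →₀ ℕ) :
    weight w d = ∑ i ∈ d.support, d i * w i := by
  simp [weight_apply, Finsupp.sum]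

theorem mul_le_weight (w : σ → ℕ) (d : σ →₀ ℕ) (i : σ) : d i * w i ≤ weight w d := by
  rw [weight_eq_sum_mul]
  by_cases hi : d i = 0
  · simp [hi]
  · exact Finset.single_le_sum (f := fun j => d j * w j) (fun _ _ => Nat.zero_le _)
      (mem_support_iff.mpr hi)

end Finsupp

namespace MvPolynomial

variable {R σ τ ι : Type*} [CommSemiring R]

theorem homogeneousComponent_mul_of_totalDegree_le {p q : MvPolynomial σ R} {a b : ℕ}
    (hp : p.totalDegree ≤ a) (hq : q.totalDegree ≤ b) :
    homogeneousComponent (a + b) (p * q) =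
      homogeneousComponent a p * homogeneousComponent b q := by
  classical
  ext m
  rw [coeff_homogeneousComponent]
  split_ifs with hm
  · simp only [coeff_mul, coeff_homogeneousComponent]
    refine Finset.sum_congr rfl fun x hx => ?_
    have hsum : x.1.degree + x.2.degree = a + b := by
      rw [← hm, ← Finset.HasAntidiagonal.mem_antidiagonal.mp hx, map_add]
    rcases lt_trichotomy x.1.degree a with h | h | h
    · rw [coeff_eq_zero_of_totalDegree_lt (hq.trans_lt (by omega : b < x.2.degree))]
      simp
    · have h2 : x.2.degree = b := by omega
      simp [h, h2]
    · rw [coeff_eq_zero_of_totalDegree_lt (hp.trans_lt h)]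
      simp
  · exact (((homogeneousComponent_isHomogeneous a p).mul
      (homogeneousComponent_isHomogeneous b q)).coeff_eq_zero hm).symm

theorem homogeneousComponent_prod_of_totalDegree_le (s : Finset ι) {p : ι → MvPolynomial σ R}
    {a : ι → ℕ} (hp : ∀ i ∈ s, (p i).totalDegree ≤ a i) :
    homogeneousComponent (∑ i ∈ s, a i) (∏ i ∈ s, p i) =
      ∏ i ∈ s, homogeneousComponent (a i) (p i) := by
  classical
  induction s using Finset.induction_on with
  | empty => simp
  | insert j s hj ih =>
    have hs : (∏ i ∈ s, p i).totalDegree ≤ ∑ i ∈ s, a i :=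
      (totalDegree_finsetProd s p).trans
        (Finset.sum_le_sum fun i hi => hp i (Finset.mem_insert_of_mem hi))
    rw [Finset.sum_insert hj, Finset.prod_insert hj, Finset.prod_insert hj,
      homogeneousComponent_mul_of_totalDegree_le (hp j (Finset.mem_insert_self j s)) hs,
      ih fun i hi => hp i (Finset.mem_insert_of_mem hi)]

theorem homogeneousComponent_pow_of_totalDegree_le {p : MvPolynomial σ R} {a : ℕ}
    (hp : p.totalDegree ≤ a) (k : ℕ) :
    homogeneousComponent (k * a) (p ^ k) = homogeneousComponent a p ^ k := by
  simpa using homogeneousComponent_prod_of_totalDegree_le (Finset.range k) (p := fun _ => p)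
    (a := fun _ => a) fun _ _ => hp

theorem aeval_monomial_eq_smul_prod (x : σ → MvPolynomial τ R) (d : σ →₀ ℕ) (c : R) :
    aeval x (monomial d c) = c • ∏ i ∈ d.support, x i ^ d i := by
  rw [aeval_monomial, Algebra.smul_def, Finsupp.prod]

section Substitution

variable {x : σ → MvPolynomial τ R} {w : σ → ℕ}

theorem totalDegree_aeval_monomial_le (hx : ∀ i, (x i).totalDegree ≤ w i) (d : σ →₀ ℕ) (c : R) :
    (aeval x (monomial d c)).totalDegree ≤ Finsupp.weight w d := by
  rw [aeval_monomial_eq_smul_prod, Finsupp.weight_eq_sum_mul]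
  exact (totalDegree_smul_le _ _).trans <| (totalDegree_finsetProd _ _).trans <|
    Finset.sum_le_sum fun i _ => (totalDegree_pow _ _).trans (Nat.mul_le_mul_left _ (hx i))

theorem homogeneousComponent_weight_aeval_monomial (hx : ∀ i, (x i).totalDegree ≤ w i)
    (d : σ →₀ ℕ) (c : R) :
    homogeneousComponent (Finsupp.weight w d) (aeval x (monomial d c)) =
      aeval (fun i => homogeneousComponent (w i) (x i)) (monomial d c) := by
  rw [aeval_monomial_eq_smul_prod, aeval_monomial_eq_smul_prod, map_smul,
    Finsupp.weight_eq_sum_mul, homogeneousComponent_prod_of_totalDegree_le _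
      fun i _ => (totalDegree_pow _ _).trans (Nat.mul_le_mul_left _ (hx i))]
  simp_rw [homogeneousComponent_pow_of_totalDegree_le (hx _)]

theorem homogeneousComponent_aeval_of_weightedTotalDegree_le (hx : ∀ i, (x i).totalDegree ≤ w i)
    {p : MvPolynomial σ R} {m : ℕ} (hm : weightedTotalDegree w p ≤ m) :
    homogeneousComponent m (aeval x p) =
      aeval (fun i => homogeneousComponent (w i) (x i)) (weightedHomogeneousComponent w m p) := by
  rw [p.as_sum, map_sum, map_sum, map_sum, map_sum]
  refine Finset.sum_congr rfl fun d hd => ?_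
  have hmono := isWeightedHomogeneous_monomial w d (coeff d p) rfl
  rcases (le_weightedTotalDegree w hd).trans hm |>.eq_or_lt with rfl | hlt
  · rw [hmono.weightedHomogeneousComponent_same, homogeneousComponent_weight_aeval_monomial hx]
  · rw [homogeneousComponent_eq_zero _ _ ((totalDegree_aeval_monomial_le hx d _).trans_lt hlt),
      hmono.weightedHomogeneousComponent_ne _ hlt.ne', map_zero]

end Substitution

theorem weightedHomogeneousComponent_weightedTotalDegree_ne_zero {M : Type*} [AddCommMonoid M]
    [LinearOrder M] [OrderBot M] (w : σ → M) {p : MvPolynomial σ R} (hp : p ≠ 0) :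
    weightedHomogeneousComponent w (weightedTotalDegree w p) p ≠ 0 := by
  classical
  obtain ⟨d, hd, hdw⟩ :=
    Finset.exists_mem_eq_sup p.support (support_nonempty.mpr hp) (Finsupp.weight w)
  intro h
  have hcoeff := congr_arg (coeff d) h
  rw [coeff_weightedHomogeneousComponent, weightedTotalDegree, hdw, if_pos rfl, coeff_zero]
    at hcoeff
  exact mem_support_iff.mp hd hcoeff

theorem degreeOf_mul_le_weightedTotalDegree (w : σ → ℕ) (p : MvPolynomial σ R) (i : σ) :
    p.degreeOf i * w i ≤ weightedTotalDegree w p := by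
  rw [degreeOf_eq_sup, Finset.sup_mul₀]
  exact Finset.sup_mono_fun fun d _ => Finsupp.mul_le_weight w d i

end MvPolynomial

theorem deg_subst_ge_of_leading_indep_general (n : ℕ) (f g : MvPolynomial (Fin n) ℂ)
    (hlead : AlgebraicIndependent ℂ
      ![homogeneousComponent f.totalDegree f, homogeneousComponent g.totalDegree g])
    (G : MvPolynomial (Fin 2) ℂ) :
    G.degreeOf 1 * g.totalDegree ≤ (aeval ![f, g] G).totalDegree := by
  rcases eq_or_ne G 0 with rfl | hG
  · simp
  set w : Fin 2 → ℕ := ![f.totalDegree, g.totalDegree]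
  have hleading : (fun i => homogeneousComponent (w i) (![f, g] i)) =
      ![homogeneousComponent f.totalDegree f, homogeneousComponent g.totalDegree g] := by
    ext1 i; fin_cases i <;> rfl
  have htop : homogeneousComponent (weightedTotalDegree w G) (aeval ![f, g] G) ≠ 0 := by
    rw [homogeneousComponent_aeval_of_weightedTotalDegree_le (fun i => by fin_cases i <;> rfl)
      le_rfl, hleading, map_ne_zero_iff _ hlead]
    exact weightedHomogeneousComponent_weightedTotalDegree_ne_zero w hG
  calc G.degreeOf 1 * g.totalDegree ≤ weightedTotalDegree w G :=
        degreeOf_mul_le_weightedTotalDegree w G 1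
    _ ≤ (aeval ![f, g] G).totalDegree :=
        not_lt.mp fun h => htop (homogeneousComponent_eq_zero _ _ h)

theorem deg_subst_ge_of_leading_indep (n : ℕ) (f g : MvPolynomial (Fin n) ℂ)
    (hind : AlgebraicIndependent ℂ ![f, g])
    (hlead : AlgebraicIndependent ℂ
      ![homogeneousComponent f.totalDegree f, homogeneousComponent g.totalDegree g])
    (hdeg : f.totalDegree < g.totalDegree)
    (G : MvPolynomial (Fin 2) ℂ) :
    G.degreeOf 1 * g.totalDegree ≤ (aeval ![f, g] G).totalDegree :=
  deg_subst_ge_of_leading_indep_general n f g hlead G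
end

section
/- Define $T \circ N: \mathbb{C}^3 \to \mathbb{C}^3$ by $(x,y,z) \mapsto (z,\; y - z(y^2+zx),\; x + 2y(y^2+zx) - z(y^2+zx)^2)$, where $N$ is the Nagata automorphism and $T$ swaps $x$ and $z$. Then for every positive integer $n$, $\operatorname{mdeg}\left((T\circ N)^n\right) = (4n-3,\, 4n-1,\, 4n+1)$. -/
open MvPolynomial

/-- The map `T ∘ N`, where `N` is the Nagata automorphism and `T` swaps `x` and `z`. -/
noncomputable def TN : PolyMap 3 :=
  ![X 2,
    X 1 - X 2 * (X 1 ^ 2 + X 2 * X 0),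
    X 0 + 2 * X 1 * (X 1 ^ 2 + X 2 * X 0) - X 2 * (X 1 ^ 2 + X 2 * X 0) ^ 2]

/-- The `n`-fold composition of `T ∘ N` with itself. -/
noncomputable def TNpow : ℕ → PolyMap 3
  | 0 => PolyMap.id 3
  | (k + 1) => PolyMap.comp TN (TNpow k)

/-!
Write `F = (f, g, h)` and `Q(F) = g² + hf`. Then `T ∘ N ∘ F = (h, g - hQ, f + 2gQ - hQ²)` and
`Q(T ∘ N ∘ F) = Q(F)`, so along the orbit `Q` stays `y² + zx`, of degree `2`. If
`deg f, deg g ≤ d = deg h`, the terms `hQ` and `hQ²` have degrees `d + 2` and `d + 4` and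
dominate the rest, so the multidegree goes from `(≤ d, ≤ d, d)` to `(d, d + 2, d + 4)`.
Starting from the identity with `d = 1` gives `(4n - 3, 4n - 1, 4n + 1)`.
-/

theorem MvPolynomial.totalDegree_sub_eq_right_of_totalDegree_lt {σ R : Type*} [CommRing R]
    {p q : MvPolynomial σ R} (h : p.totalDegree < q.totalDegree) :
    (p - q).totalDegree = q.totalDegree := by
  rw [sub_eq_add_neg, totalDegree_add_eq_right_of_totalDegree_lt (by rwa [totalDegree_neg]),
    totalDegree_neg]

noncomputable def nagataQuadric (F : PolyMap 3) : MvPolynomial (Fin 3) ℂ :=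
  F 1 ^ 2 + F 2 * F 0

theorem totalDegree_nagataQuadric_id : (nagataQuadric (PolyMap.id 3)).totalDegree = 2 := by
  have hom : (nagataQuadric (PolyMap.id 3)).IsHomogeneous 2 :=
    ((isHomogeneous_X ℂ 1).pow 2).add ((isHomogeneous_X ℂ 2).mul (isHomogeneous_X ℂ 0))
  refine hom.totalDegree fun h => ?_
  have := congrArg (eval ![0, 1, 0]) h
  simp [nagataQuadric, PolyMap.id] at this

section TNComp

variable (F : PolyMap 3)

theorem TN_comp_zero : TN.comp F 0 = F 2 := by
  simp [PolyMap.comp, TN]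

theorem TN_comp_one : TN.comp F 1 = F 1 - F 2 * nagataQuadric F := by
  simp [PolyMap.comp, TN, nagataQuadric]

theorem TN_comp_two :
    TN.comp F 2 = F 0 + 2 * F 1 * nagataQuadric F - F 2 * nagataQuadric F ^ 2 := by
  simp [PolyMap.comp, TN, nagataQuadric, map_ofNat]

theorem nagataQuadric_TN_comp : nagataQuadric (TN.comp F) = nagataQuadric F := by
  rw [nagataQuadric, TN_comp_zero, TN_comp_one, TN_comp_two, nagataQuadric]
  ring

theorem mdeg_TN_comp {d : ℕ} (hd : 1 ≤ d) (hQ : (nagataQuadric F).totalDegree = 2)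
    (h0 : (F 0).totalDegree ≤ d) (h1 : (F 1).totalDegree ≤ d) (h2 : (F 2).totalDegree = d) :
    (TN.comp F).mdeg = ![d, d + 2, d + 4] := by
  have hQ0 : nagataQuadric F ≠ 0 := by rintro h; simp [h] at hQ
  have hF2 : F 2 ≠ 0 := by rintro h; simp [h] at h2; omega
  have deg_hQ : (F 2 * nagataQuadric F).totalDegree = d + 2 := by
    rw [totalDegree_mul_of_isDomain hF2 hQ0, h2, hQ]
  have deg_hQ2 : (F 2 * nagataQuadric F ^ 2).totalDegree = d + 4 := by
    rw [totalDegree_mul_of_isDomain hF2 (pow_ne_zero 2 hQ0), sq,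
      totalDegree_mul_of_isDomain hQ0 hQ0, h2, hQ]
  have deg_low : (F 0 + 2 * F 1 * nagataQuadric F).totalDegree ≤ d + 2 := by
    have deg_2g : (2 * F 1).totalDegree ≤ d := by
      rw [two_mul]; exact (totalDegree_add _ _).trans (max_le h1 h1)
    exact (totalDegree_add _ _).trans (max_le (by omega) ((totalDegree_mul _ _).trans (by omega)))
  funext i
  fin_cases i
  · change (TN.comp F 0).totalDegree = d
    rw [TN_comp_zero, h2]
  · change (TN.comp F 1).totalDegree = d + 2
    rw [TN_comp_one, totalDegree_sub_eq_right_of_totalDegree_lt (by omega), deg_hQ]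
  · change (TN.comp F 2).totalDegree = d + 4
    rw [TN_comp_two, totalDegree_sub_eq_right_of_totalDegree_lt (by omega), deg_hQ2]

end TNComp

theorem nagataQuadric_TNpow (n : ℕ) : nagataQuadric (TNpow n) = nagataQuadric (PolyMap.id 3) := by
  induction n with
  | zero => rfl
  | succ k ih => rw [TNpow, nagataQuadric_TN_comp, ih]

theorem mdeg_TNpow_succ (k : ℕ) : (TNpow (k + 1)).mdeg = ![4 * k + 1, 4 * k + 3, 4 * k + 5] := by
  have hQ (m : ℕ) : (nagataQuadric (TNpow m)).totalDegree = 2 := by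
    rw [nagataQuadric_TNpow, totalDegree_nagataQuadric_id]
  induction k with
  | zero =>
    exact mdeg_TN_comp _ le_rfl (hQ 0) (totalDegree_X _).le (totalDegree_X _).le (totalDegree_X _)
  | succ k ih =>
    have hdeg (i : Fin 3) : (TNpow (k + 1) i).totalDegree = _ := congrFun ih i
    exact mdeg_TN_comp (d := 4 * k + 5) _ (by omega) (hQ (k + 1))
      ((hdeg 0).trans_le (by show 4 * k + 1 ≤ _; omega))
      ((hdeg 1).trans_le (by show 4 * k + 3 ≤ _; omega)) (hdeg 2)

theorem mdeg_TN_pow (n : ℕ) (hn : 1 ≤ n) :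
    (TNpow n).mdeg = ![4 * n - 3, 4 * n - 1, 4 * n + 1] := by
  obtain ⟨k, rfl⟩ : ∃ k, n = k + 1 := ⟨n - 1, by omega⟩
  rw [mdeg_TNpow_succ, show 4 * (k + 1) - 3 = 4 * k + 1 by omega,
    show 4 * (k + 1) - 1 = 4 * k + 3 by omega, show 4 * (k + 1) + 1 = 4 * k + 5 by omega]
end

section
/- Let $a_0 = 1$ and define $a_1, \ldots, a_k \in \mathbb{C}$ recursively by $a_s = \frac{1}{2}\left(\binom{2k+1}{s} - \sum_{l+m=s,\, 0<l,m<s} a_l a_m\right)$ (so that $\sum_{l+m=s,\,0\le l,m\le k} a_l a_m = \binom{2k+1}{s}$ for $s = 0,1,\ldots,k$). Then for $k \geq 3$ and $r \in \{k-1, k, k+1, k+2\}$, the polynomial $(X+Z^4)^{2k+1} - \left(Y + Z^r + \sum_{l=0}^{k} a_l X^l Z^{4k+2-4l}\right)^2 \in \mathbb{C}[X,Y,Z]$ has total degree exactly $4k+2+r$. -/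
/-!
Substitute `x ↦ X`, `y ↦ Z⁴` into binary forms obtained by homogenizing univariate
polynomials: `(X + Z⁴)^(2k+1)` comes from `(1 + t)^(2k+1)`, and `W = ∑ aₗ Xˡ Z^(4k+2-4l)` is `Z²`
times the image of `w = ∑ₗ aₗ tˡ`. The recursion for the `aₗ` says that `w²` agrees with
`(1 + t)^(2k+1)` up to order `k`, so `(X + Z⁴)^(2k+1) - W²` is `X^(k+1)` times the image of a
form of degree `k`, of total degree at most `4k`; hence it has total degree at most
`5k + 1 ≤ 4k + 2 + r`. The rest, `(Y + Zʳ)(Y + Zʳ + 2W)`, has degree at most `r + 4k + 2`. On the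
line `X = Y = 0` the polynomial restricts to `Z^(8k+4) - (Zʳ + Z^(4k+2))² = -Z^(2r) - 2Z^(4k+2+r)`,
which gives the lower bound.
-/

open MvPolynomial
open scoped Polynomial

namespace MvPolynomial

variable {σ τ R : Type*} [CommSemiring R]

theorem totalDegree_aeval_le {d : ℕ} (f : σ → MvPolynomial τ R)
    (hf : ∀ i, (f i).totalDegree ≤ d) (q : MvPolynomial σ R) :
    (aeval f q).totalDegree ≤ d * q.totalDegree := by
  conv_lhs => rw [q.as_sum, map_sum]
  refine (totalDegree_finsetSum _ _).trans (Finset.sup_le fun m hm => ?_)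
  rw [aeval_monomial, algebraMap_eq]
  refine (totalDegree_mul _ _).trans ?_
  rw [totalDegree_C, zero_add]
  calc (m.prod fun i e => f i ^ e).totalDegree
      ≤ ∑ i ∈ m.support, (f i ^ m i).totalDegree := totalDegree_finsetProd _ _
    _ ≤ ∑ i ∈ m.support, d * m i :=
        Finset.sum_le_sum fun i _ => (totalDegree_pow _ _).trans <| by
          rw [mul_comm]; exact Nat.mul_le_mul_right _ (hf i)
    _ = d * m.sum fun _ e => e := by rw [Finsupp.sum, Finset.mul_sum]
    _ ≤ d * q.totalDegree := Nat.mul_le_mul_left _ (le_totalDegree hm)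

theorem natDegree_aeval_le {d : ℕ} (g : σ → R[X]) (hg : ∀ i, (g i).natDegree ≤ d)
    (q : MvPolynomial σ R) :
    (aeval g q).natDegree ≤ d * q.totalDegree := by
  conv_lhs => rw [q.as_sum, map_sum]
  refine Polynomial.natDegree_sum_le_of_forall_le _ _ fun m hm => ?_
  rw [aeval_monomial, Polynomial.algebraMap_eq]
  refine (Polynomial.natDegree_C_mul_le _ _).trans ?_
  calc (m.prod fun i e => g i ^ e).natDegree
      ≤ ∑ i ∈ m.support, (g i ^ m i).natDegree := Polynomial.natDegree_prod_le _ _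
    _ ≤ ∑ i ∈ m.support, d * m i :=
        Finset.sum_le_sum fun i _ => Polynomial.natDegree_pow_le.trans <| by
          rw [mul_comm]; exact Nat.mul_le_mul_right _ (hg i)
    _ = d * m.sum fun _ e => e := by rw [Finsupp.sum, Finset.mul_sum]
    _ ≤ d * q.totalDegree := Nat.mul_le_mul_left _ (le_totalDegree hm)

end MvPolynomial

namespace Polynomial

section CommSemiring

variable {R : Type*} [CommSemiring R]

theorem homogenize_one_add_X_pow (n : ℕ) :
    homogenize ((1 + X : R[X]) ^ n) n = (.X 1 + .X 0) ^ n := by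
  refine homogenize_eq_of_isHomogeneous ?_ (by simp)
  simpa using ((isHomogeneous_X R (1 : Fin 2)).add (isHomogeneous_X R 0)).pow n

theorem homogenize_trunc (φ : PowerSeries R) (n : ℕ) :
    homogenize (PowerSeries.trunc (n + 1) φ) n =
      ∑ l ∈ Finset.range (n + 1), .C (PowerSeries.coeff l φ) * .X 0 ^ l * .X 1 ^ (n - l) := by
  rw [PowerSeries.trunc_apply, ← Finset.range_eq_Ico, homogenize_finsetSum]
  refine Finset.sum_congr rfl fun l hl => ?_
  rw [← C_mul_X_pow_eq_monomial, homogenize_C_mul,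
    homogenize_X_pow (Nat.lt_succ_iff.mp (Finset.mem_range.mp hl)), mul_assoc]

end CommSemiring

section CommRing

variable {R : Type*} [CommRing R]

theorem X_pow_dvd_sub_trunc_sq (p : R[X]) (φ : PowerSeries R) {n : ℕ}
    (h : ∀ d < n, PowerSeries.coeff d (φ ^ 2) = p.coeff d) :
    X ^ n ∣ p - (PowerSeries.trunc n φ) ^ 2 := by
  refine X_pow_dvd_iff.mpr fun d hd => ?_
  rw [coeff_sub, ← h d hd, sq, PowerSeries.coeff_mul_eq_coeff_trunc_mul_trunc _ _ hd,
    ← Polynomial.coe_mul, Polynomial.coeff_coe, sq, sub_self]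

theorem exists_homogenize_sub_X_mul_homogenize_sq [Nontrivial R] {p w : R[X]} {k : ℕ}
    (hp : p.natDegree ≤ 2 * k + 1) (hw : w.natDegree ≤ k) (hdvd : X ^ (k + 1) ∣ p - w ^ 2) :
    ∃ h : MvPolynomial (Fin 2) R, h.totalDegree ≤ k ∧
      homogenize p (2 * k + 1) - .X 1 * homogenize w k ^ 2 = .X 0 ^ (k + 1) * h := by
  obtain ⟨g, hg⟩ := hdvd
  have hgk : g.natDegree ≤ k := by
    rcases eq_or_ne g 0 with rfl | hg0
    · simp
    have hdeg : (p - w ^ 2).natDegree ≤ 2 * k + 1 :=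
      (natDegree_sub_le_of_le hp (natDegree_pow_le.trans (by omega))).trans (max_le le_rfl le_rfl)
    rw [hg, natDegree_X_pow_mul _ hg0] at hdeg
    omega
  refine ⟨homogenize g k, (isHomogeneous_homogenize g).totalDegree_le, ?_⟩
  have hw2 : homogenize (w ^ 2 * 1) (k + k + 1) = .X 1 * homogenize w k ^ 2 := by
    rw [homogenize_mul (m := k + k) (n := 1) _ _ (natDegree_pow_le.trans (by omega))
      (natDegree_one.trans_le zero_le_one), sq, homogenize_mul _ _ hw hw, homogenize_one, pow_one,
      mul_comm, sq]
  calc homogenize p (2 * k + 1) - .X 1 * homogenize w k ^ 2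
      = homogenize (p - w ^ 2) (2 * k + 1) := by
        rw [homogenize_sub, ← hw2, mul_one, two_mul]
    _ = homogenize (X ^ (k + 1)) (k + 1) * homogenize g k := by
        rw [hg, ← homogenize_mul _ _ (natDegree_X_pow_le _) hgk]; congr 1; omega
    _ = .X 0 ^ (k + 1) * homogenize g k := by simp

end CommRing
end Polynomial

section SpecialDifference

variable {R : Type*} [CommRing R]

noncomputable def sqrtApprox (a : ℕ → R) (k : ℕ) : MvPolynomial (Fin 3) R :=
  ∑ l ∈ Finset.range (k + 1), C (a l) * X 0 ^ l * X 2 ^ (4 * k + 2 - 4 * l)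

noncomputable def specialDifference (a : ℕ → R) (k r : ℕ) : MvPolynomial (Fin 3) R :=
  (X 0 + X 2 ^ 4) ^ (2 * k + 1) - (X 1 + X 2 ^ r + sqrtApprox a k) ^ 2

theorem aeval_homogenize_one_add_X_pow (n : ℕ) :
    aeval ![X 0, X 2 ^ 4] (Polynomial.homogenize ((1 + Polynomial.X : R[X]) ^ n) n) =
      (X 0 + X 2 ^ 4 : MvPolynomial (Fin 3) R) ^ n := by
  simp [Polynomial.homogenize_one_add_X_pow, add_comm]

theorem X_sq_mul_aeval_homogenize_trunc (a : ℕ → R) (k : ℕ) :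
    X 2 ^ 2 * aeval ![X 0, X 2 ^ 4]
      (Polynomial.homogenize (PowerSeries.trunc (k + 1) (PowerSeries.mk a)) k) =
      sqrtApprox a k := by
  rw [Polynomial.homogenize_trunc, map_sum, Finset.mul_sum, sqrtApprox]
  refine Finset.sum_congr rfl fun l hl => ?_
  have hlk : l ≤ k := Nat.lt_succ_iff.mp (Finset.mem_range.mp hl)
  simp only [map_mul, map_pow, aeval_C, aeval_X, PowerSeries.coeff_mk, algebraMap_eq,
    Matrix.cons_val_zero, Matrix.cons_val_one]
  rw [← pow_mul, mul_left_comm, ← pow_add, show 2 + 4 * (k - l) = 4 * k + 2 - 4 * l by omega]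

theorem aeval_zero_zero_X_sqrtApprox (a : ℕ → R) (k : ℕ) :
    aeval ![0, 0, Polynomial.X] (sqrtApprox a k) =
      Polynomial.C (a 0) * Polynomial.X ^ (4 * k + 2) := by
  simp [sqrtApprox, Finset.sum_range_succ']

variable [Nontrivial R]

theorem totalDegree_aeval_X_X_pow_four_le (q : MvPolynomial (Fin 2) R) :
    (aeval ![(X 0 : MvPolynomial (Fin 3) R), X 2 ^ 4] q).totalDegree ≤ 4 * q.totalDegree :=
  totalDegree_aeval_le _ (Fin.forall_fin_two.mpr ⟨by simp, by simp⟩) q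

theorem totalDegree_sqrtApprox_le (a : ℕ → R) (k : ℕ) :
    (sqrtApprox a k).totalDegree ≤ 4 * k + 2 := by
  rw [← X_sq_mul_aeval_homogenize_trunc]
  refine (totalDegree_mul _ _).trans ?_
  rw [totalDegree_X_pow]
  have := (totalDegree_aeval_X_X_pow_four_le _).trans <| Nat.mul_le_mul_left 4
    (Polynomial.isHomogeneous_homogenize (n := k) (PowerSeries.trunc (k + 1) (PowerSeries.mk a))
      ).totalDegree_le
  omega

theorem totalDegree_sub_sqrtApprox_sq_le (a : ℕ → R) (k : ℕ)
    (ha : ∀ s ≤ k, ∑ p ∈ Finset.HasAntidiagonal.antidiagonal s, a p.1 * a p.2 =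
      ((2 * k + 1).choose s : R)) :
    ((X 0 + X 2 ^ 4) ^ (2 * k + 1) - sqrtApprox a k ^ 2).totalDegree ≤ 5 * k + 1 := by
  set w := PowerSeries.trunc (k + 1) (PowerSeries.mk a)
  have hdvd : Polynomial.X ^ (k + 1) ∣ (1 + Polynomial.X : R[X]) ^ (2 * k + 1) - w ^ 2 :=
    Polynomial.X_pow_dvd_sub_trunc_sq _ _ fun d hd => by
      rw [sq, PowerSeries.coeff_mul, Polynomial.coeff_one_add_X_pow, ← ha d (by omega)]
      simp only [PowerSeries.coeff_mk]
  have hp : ((1 + Polynomial.X : R[X]) ^ (2 * k + 1)).natDegree ≤ 2 * k + 1 := by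
    compute_degree
  obtain ⟨h, hk, hh⟩ := Polynomial.exists_homogenize_sub_X_mul_homogenize_sq hp
    (Nat.lt_succ_iff.mp (PowerSeries.natDegree_trunc_lt _ k)) hdvd
  have hPW : (X 0 + X 2 ^ 4) ^ (2 * k + 1) - sqrtApprox a k ^ 2 =
      X 0 ^ (k + 1) * aeval ![X 0, X 2 ^ 4] h := by
    have := congrArg (aeval ![(X 0 : MvPolynomial (Fin 3) R), X 2 ^ 4]) hh
    simp only [map_sub, map_mul, map_pow, aeval_homogenize_one_add_X_pow, aeval_X,
      Matrix.cons_val_zero, Matrix.cons_val_one] at this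
    rw [← X_sq_mul_aeval_homogenize_trunc, ← this]
    ring
  rw [hPW]
  refine (totalDegree_mul _ _).trans ?_
  rw [totalDegree_X_pow]
  have := totalDegree_aeval_X_X_pow_four_le h
  omega

theorem natDegree_X_pow_sub_sq (h2 : (2 : R) ≠ 0) {n r : ℕ} (h : r < n) :
    ((Polynomial.X : R[X]) ^ (2 * n) - (Polynomial.X ^ r + Polynomial.X ^ n) ^ 2).natDegree =
      n + r := by
  rw [show ((Polynomial.X : R[X]) ^ (2 * n) - (Polynomial.X ^ r + Polynomial.X ^ n) ^ 2) =
      -Polynomial.X ^ (2 * r) - Polynomial.C 2 * Polynomial.X ^ (n + r) by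
    rw [Polynomial.C_ofNat]; ring]
  rw [Polynomial.natDegree_sub_eq_right_of_natDegree_lt] <;>
    rw [Polynomial.natDegree_C_mul_X_pow _ _ h2]
  rw [Polynomial.natDegree_neg, Polynomial.natDegree_X_pow]
  omega

theorem totalDegree_specialDifference_le (a : ℕ → R) {k r : ℕ} (hr1 : 1 ≤ r) (hkr : k ≤ r + 1)
    (hrk : r ≤ 4 * k + 2)
    (ha : ∀ s ≤ k, ∑ p ∈ Finset.HasAntidiagonal.antidiagonal s, a p.1 * a p.2 =
      ((2 * k + 1).choose s : R)) :
    (specialDifference a k r).totalDegree ≤ 4 * k + 2 + r := by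
  have hW := totalDegree_sqrtApprox_le a k
  have hYZ : (X 1 + X 2 ^ r : MvPolynomial (Fin 3) R).totalDegree ≤ r :=
    (totalDegree_add _ _).trans
      (max_le (by rw [totalDegree_X]; exact hr1) (totalDegree_X_pow _ _).le)
  have hQ := (totalDegree_add _ _).trans <| max_le
    ((totalDegree_add _ _).trans (max_le (hYZ.trans (by omega)) hW)) hW
  have hmul := totalDegree_mul (X 1 + X 2 ^ r : MvPolynomial (Fin 3) R)
    (X 1 + X 2 ^ r + sqrtApprox a k + sqrtApprox a k)
  have hPW := totalDegree_sub_sqrtApprox_sq_le a k ha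
  have hsplit : specialDifference a k r =
      ((X 0 + X 2 ^ 4) ^ (2 * k + 1) - sqrtApprox a k ^ 2) -
        (X 1 + X 2 ^ r) * (X 1 + X 2 ^ r + sqrtApprox a k + sqrtApprox a k) := by
    rw [specialDifference]; ring
  rw [hsplit]
  exact (totalDegree_sub _ _).trans (max_le (by omega) (by omega))

theorem le_totalDegree_specialDifference (h2 : (2 : R) ≠ 0) (a : ℕ → R) (ha0 : a 0 = 1)
    {k r : ℕ} (hr : r < 4 * k + 2) :
    4 * k + 2 + r ≤ (specialDifference a k r).totalDegree :=
  calc 4 * k + 2 + r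
      = (aeval ![0, 0, Polynomial.X] (specialDifference a k r)).natDegree := by
        simp only [specialDifference, Fin.isValue, map_sub, map_pow, map_add, aeval_X,
          Matrix.cons_val_zero, Matrix.cons_val, zero_add, ← pow_mul, Matrix.cons_val_one,
          aeval_zero_zero_X_sqrtApprox, ha0, map_one, one_mul]
        rw [show 4 * (2 * k + 1) = 2 * (4 * k + 2) by ring, natDegree_X_pow_sub_sq h2 hr]
    _ ≤ 1 * _ := natDegree_aeval_le _ (Fin.forall_fin_succ.mpr ⟨by simp, by simp⟩) _
    _ = _ := one_mul _

end SpecialDifference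

theorem degree_of_special_difference (k r : ℕ) (hk : 3 ≤ k)
    (hr : r ∈ ({k - 1, k, k + 1, k + 2} : Set ℕ))
    (a : ℕ → ℂ) (ha0 : a 0 = 1)
    (hrec : ∀ s ≤ k, ∑ p ∈ Finset.HasAntidiagonal.antidiagonal s, a p.1 * a p.2 =
      ((2 * k + 1).choose s : ℂ)) :
    ((X 0 + X 2 ^ 4) ^ (2 * k + 1) -
      (X 1 + X 2 ^ r + ∑ l ∈ Finset.range (k + 1),
        C (a l) * X 0 ^ l * X 2 ^ (4 * k + 2 - 4 * l)) ^ 2 :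
      MvPolynomial (Fin 3) ℂ).totalDegree = 4 * k + 2 + r := by
  obtain ⟨hr1, hkr, hrk⟩ : 1 ≤ r ∧ k ≤ r + 1 ∧ r < 4 * k + 2 := by
    simp only [Set.mem_insert_iff, Set.mem_singleton_iff] at hr
    omega
  exact le_antisymm (totalDegree_specialDifference_le a hr1 hkr hrk.le hrec)
    (le_totalDegree_specialDifference two_ne_zero a ha0 hrk)
end

section
/- Let $F_1 = X + Z^4$, $F_2 = Y + \frac{3}{2}XZ^2 + Z^6$ in $\mathbb{C}[X,Y,Z]$. Then for every $k \in \mathbb{N}$, the polynomial $(F_2^2 - F_1^3)\, F_1^k$ has total degree $7 + 4k$. Consequently, for every integer $k \geq 0$ there exists a tame automorphism of $\mathbb{C}^3$ with multidegree $(4, 6, 7+4k)$. -/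
open MvPolynomial

/-!
Expanding, `F₂² - F₁³ = 2YZ⁶ + Y² + 3XYZ² - (3/4)X²Z⁴ - X³`: the coefficient `3/2` is what cancels
the monomial `XZ⁸`, so `2YZ⁶` is the only term of top degree `7`. Total degree is additive on the
domain `ℂ[X,Y,Z]`, hence `(F₂² - F₁³)F₁ᵏ` has degree `7 + 4k`, and the tame map
`(F₁, F₂, Z + (F₂² - F₁³)F₁ᵏ)` has multidegree `(4, 6, 7 + 4k)`.
-/

namespace MvPolynomial

variable {σ R : Type*}

@[simp]
theorem totalDegree_ofNat [CommSemiring R] (n : ℕ) [n.AtLeastTwo] :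
    (ofNat(n) : MvPolynomial σ R).totalDegree = 0 := by
  rw [← map_ofNat C]
  exact totalDegree_C _

theorem totalDegree_pow_of_isDomain [CommRing R] [IsDomain R] (p : MvPolynomial σ R) (n : ℕ) :
    (p ^ n).totalDegree = n * p.totalDegree := by
  rcases eq_or_ne p 0 with rfl | hp
  · cases n <;> simp
  induction n with
  | zero => simp
  | succ n ih =>
    rw [pow_succ, totalDegree_mul_of_isDomain (pow_ne_zero n hp) hp, ih, Nat.succ_mul]

end MvPolynomial

namespace PolyMap

noncomputable def elementary {n : ℕ} (i : Fin n) (p : MvPolynomial (Fin n) ℂ) : PolyMap n :=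
  Function.update (fun j => X j) i (X i + p)

theorem isTame_elementary {n : ℕ} {i : Fin n} {p : MvPolynomial (Fin n) ℂ}
    (hp : p ∈ supported ℂ ({i}ᶜ : Set (Fin n))) : (elementary i p).IsTame :=
  .elementary ⟨i, p, hp, rfl⟩

theorem elementary_comp {n : ℕ} (i : Fin n) (p : MvPolynomial (Fin n) ℂ) (G : PolyMap n) :
    (elementary i p).comp G = Function.update G i (G i + aeval G p) := by
  funext j
  rcases eq_or_ne j i with rfl | hj
  · simp [comp, elementary]
  · simp [comp, elementary, hj]

end PolyMap

open PolyMap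

noncomputable def F₁ : MvPolynomial (Fin 3) ℂ := X 0 + X 2 ^ 4

noncomputable def F₂ : MvPolynomial (Fin 3) ℂ := X 1 + C (3 / 2) * X 0 * X 2 ^ 2 + X 2 ^ 6

theorem totalDegree_F₁ : F₁.totalDegree = 4 := by
  rw [F₁, totalDegree_add_eq_right_of_totalDegree_lt] <;> simp

theorem totalDegree_F₂ : F₂.totalDegree = 6 := by
  have hlow : (X 1 + C (3 / 2) * X 0 * X 2 ^ 2 : MvPolynomial (Fin 3) ℂ).totalDegree < 6 :=
    (totalDegree_add _ _).trans_lt (by simp [totalDegree_mul_of_isDomain])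
  rw [F₂, totalDegree_add_eq_right_of_totalDegree_lt (by simpa using hlow), totalDegree_X_pow]

theorem sq_F₂_sub_cube_F₁ : F₂ ^ 2 - F₁ ^ 3 = 2 * X 1 * X 2 ^ 6 +
    (X 1 ^ 2 + 3 * X 0 * X 1 * X 2 ^ 2 - C (3 / 4) * X 0 ^ 2 * X 2 ^ 4 - X 0 ^ 3) := by
  have h₁ : (2 * C (3 / 2) : MvPolynomial (Fin 3) ℂ) = 3 := by
    rw [← map_ofNat C 2, ← C_mul, ← map_ofNat C 3]; norm_num
  have h₂ : (C (3 / 2) ^ 2 + C (3 / 4) : MvPolynomial (Fin 3) ℂ) = 3 := by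
    rw [← C_pow, ← C_add, ← map_ofNat C 3]; norm_num
  rw [F₁, F₂]
  linear_combination (X 0 * X 1 * X 2 ^ 2 + X 0 * X 2 ^ 8) * h₁ + X 0 ^ 2 * X 2 ^ 4 * h₂

theorem totalDegree_sq_F₂_sub_cube_F₁ : (F₂ ^ 2 - F₁ ^ 3).totalDegree = 7 := by
  have hlow : (X 1 ^ 2 + 3 * X 0 * X 1 * X 2 ^ 2 - C (3 / 4) * X 0 ^ 2 * X 2 ^ 4 - X 0 ^ 3 :
      MvPolynomial (Fin 3) ℂ).totalDegree ≤ 6 := by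
    rw [← mem_restrictTotalDegree]
    refine sub_mem (sub_mem (add_mem ?_ ?_) ?_) ?_ <;>
      simp [mem_restrictTotalDegree, totalDegree_mul_of_isDomain]
  have htop : (2 * X 1 * X 2 ^ 6 : MvPolynomial (Fin 3) ℂ).totalDegree = 7 := by
    simp [totalDegree_mul_of_isDomain]
  rw [sq_F₂_sub_cube_F₁, totalDegree_add_eq_left_of_totalDegree_lt] <;> omega

theorem totalDegree_mul_pow_F₁ (k : ℕ) : ((F₂ ^ 2 - F₁ ^ 3) * F₁ ^ k).totalDegree = 7 + 4 * k := by
  have hP : F₂ ^ 2 - F₁ ^ 3 ≠ 0 := fun h => by simpa [h] using totalDegree_sq_F₂_sub_cube_F₁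
  have hF₁ : F₁ ≠ 0 := fun h => by simpa [h] using totalDegree_F₁
  rw [totalDegree_mul_of_isDomain hP (pow_ne_zero k hF₁), totalDegree_pow_of_isDomain,
    totalDegree_sq_F₂_sub_cube_F₁, totalDegree_F₁, mul_comm]

noncomputable def triangular : PolyMap 3 :=
  (elementary 0 (X 2 ^ 4)).comp (elementary 1 (C (3 / 2) * X 0 * X 2 ^ 2 + X 2 ^ 6))

theorem triangular_eq : triangular = ![F₁, F₂, X 2] := by
  rw [triangular, elementary_comp]
  funext i
  fin_cases i <;> simp [elementary, F₁, F₂, add_assoc]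

noncomputable def tameMap (k : ℕ) : PolyMap 3 :=
  (elementary 2 ((X 1 ^ 2 - X 0 ^ 3) * X 0 ^ k)).comp triangular

theorem tameMap_eq (k : ℕ) : tameMap k = ![F₁, F₂, X 2 + (F₂ ^ 2 - F₁ ^ 3) * F₁ ^ k] := by
  rw [tameMap, elementary_comp, triangular_eq]
  funext i
  fin_cases i <;> simp

theorem isTame_tameMap (k : ℕ) : (tameMap k).IsTame := by
  have hX : ∀ {i j : Fin 3}, j ≠ i → (X j : MvPolynomial (Fin 3) ℂ) ∈ supported ℂ {i}ᶜ :=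
    fun h => X_mem_supported.2 h
  refine .comp (isTame_elementary ?_) (.comp (isTame_elementary ?_) (isTame_elementary ?_))
  · exact mul_mem (sub_mem (pow_mem (hX (by decide)) 2) (pow_mem (hX (by decide)) 3))
      (pow_mem (hX (by decide)) k)
  · exact pow_mem (hX (by decide)) 4
  · exact add_mem (mul_mem (mul_mem (Subalgebra.algebraMap_mem _ _) (hX (by decide)))
      (pow_mem (hX (by decide)) 2)) (pow_mem (hX (by decide)) 6)

theorem mdeg_tameMap (k : ℕ) : (tameMap k).mdeg = ![4, 6, 7 + 4 * k] := by
  have h₃ : (X 2 + (F₂ ^ 2 - F₁ ^ 3) * F₁ ^ k).totalDegree = 7 + 4 * k := by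
    have hdeg := totalDegree_mul_pow_F₁ k
    rw [totalDegree_add_eq_right_of_totalDegree_lt (by rw [hdeg, totalDegree_X]; omega), hdeg]
  funext i
  fin_cases i <;> simp [mdeg, tameMap_eq, totalDegree_F₁, totalDegree_F₂, h₃]

theorem deg_and_tame_4_6_7_plus_4k (k : ℕ) :
    ((((X 1 + C ((3 : ℂ) / 2) * X 0 * X 2 ^ 2 + X 2 ^ 6) ^ 2 -
        (X 0 + X 2 ^ 4) ^ 3) * (X 0 + X 2 ^ 4) ^ k :
      MvPolynomial (Fin 3) ℂ).totalDegree = 7 + 4 * k) ∧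
    ∃ F : PolyMap 3, F.IsTame ∧ F.mdeg = ![4, 6, 7 + 4 * k] :=
  ⟨totalDegree_mul_pow_F₁ k, tameMap k, isTame_tameMap k, mdeg_tameMap k⟩
end
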